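/- arXiv:1011.6434 — 11 statements merged into one kernel-verified Lean document; each statement's English description precedes it below -/
import Mathlib

section
/- Let L be a labelled transition system over an alphabet Σ and let P be any state of L. Then the set availTraces(P) of availability traces of P is a member of the Availability Traces Model: it is nonempty, prefix-closed, and satisfies healthiness conditions (2)–(4). -/
/-- An availability action over the alphabet `E`: `Sum.inl a` is an ordinary event `a ∈ Σ`,
and `Sum.inr a` is the offer `◎a` of the event `a ∈ Σ`. -/
abbrev Act (E : Type*) := E ⊕ E

variable {E : Type*}

/-- A set `T` of availability traces is healthy (a member of the Availability Traces Model):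
(1) nonempty and prefix-closed; (2) offers can be duplicated or removed; (3) an offered
event can be performed; (4) a performed event can first be offered. -/
def Healthy (T : Set (List (Act E))) : Prop :=
  T.Nonempty ∧
  (∀ s t : List (Act E), s ++ t ∈ T → s ∈ T) ∧
  (∀ (tr : List (Act E)) (a : E) (tr' : List (Act E)),
    tr ++ [Sum.inr a] ++ tr' ∈ T →
      tr ++ [Sum.inr a, Sum.inr a] ++ tr' ∈ T ∧ tr ++ tr' ∈ T) ∧
  (∀ (tr : List (Act E)) (a : E), tr ++ [Sum.inr a] ∈ T → tr ++ [Sum.inl a] ∈ T) ∧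
  (∀ (tr : List (Act E)) (a : E) (tr' : List (Act E)),
    tr ++ [Sum.inl a] ++ tr' ∈ T → tr ++ [Sum.inr a, Sum.inl a] ++ tr' ∈ T)

/-- `HasTrace step P tr` holds if `tr` is an availability trace of the state `P` of the LTS
with transition relation `step`: `tr` is the sequence of non-τ labels of some finite sequence
of consecutive derived transitions starting at `P`, where the derived transitions are the
ordinary transitions (labelled by `none` for τ, or `some a` for an event `a`), together with
self-loops `P ⟶◎a P` whenever `P` has an `a`-transition. -/
inductive HasTrace {S : Type*} (step : S → Option E → S → Prop) : S → List (Act E) → Prop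
  | nil (P : S) : HasTrace step P []
  | tau {P Q : S} {tr} : step P none Q → HasTrace step Q tr → HasTrace step P tr
  | ev {P Q : S} {a : E} {tr} : step P (some a) Q → HasTrace step Q tr →
      HasTrace step P (Sum.inl a :: tr)
  | offer {P : S} {a : E} {tr} : (∃ Q, step P (some a) Q) → HasTrace step P tr →
      HasTrace step P (Sum.inr a :: tr)

/-- The set of availability traces of a state `P`. -/
def availTraces {S : Type*} (step : S → Option E → S → Prop) (P : S) : Set (List (Act E)) :=
  {tr | HasTrace step P tr}

/-!
Every availability trace starts with a run of τ-steps followed by one visible action, and the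
offer `◎a` leaves the state unchanged. Hence each healthiness condition is a rewrite
`u ↦ v` of a trace suffix that is valid from every state; such a rewrite lifts to
`s ++ u ↦ s ++ v`, because the run producing `s` can be replayed and then continued by `v`.
-/

open Relation

namespace HasTrace

variable {S : Type*} {step : S → Option E → S → Prop} {P : S} {a : E} {t : List (Act E)}

theorem of_reflTransGen {Q : S} (hPQ : ReflTransGen (step · none ·) P Q)
    (hQ : HasTrace step Q t) : HasTrace step P t := by
  induction hPQ using ReflTransGen.head_induction_on with
  | refl => exact hQ
  | head hτ _ ih => exact .tau hτ ih

theorem exists_of_offer_cons (h : HasTrace step P (.inr a :: t)) :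
    ∃ Q, ReflTransGen (step · none ·) P Q ∧ (∃ R, step Q (some a) R) ∧ HasTrace step Q t := by
  generalize hl : (Sum.inr a :: t : List (Act E)) = l at h
  induction h with
  | nil => cases hl
  | tau hτ _ ih =>
    obtain ⟨Q, hPQ, hQ⟩ := ih hl
    exact ⟨Q, .head hτ hPQ, hQ⟩
  | ev => cases hl
  | offer hex ht => cases hl; exact ⟨_, .refl, hex, ht⟩

theorem exists_of_ev_cons (h : HasTrace step P (.inl a :: t)) :
    ∃ Q R, ReflTransGen (step · none ·) P Q ∧ step Q (some a) R ∧ HasTrace step R t := by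
  generalize hl : (Sum.inl a :: t : List (Act E)) = l at h
  induction h with
  | nil => cases hl
  | tau hτ _ ih =>
    obtain ⟨Q, R, hPQ, hQR⟩ := ih hl
    exact ⟨Q, R, .head hτ hPQ, hQR⟩
  | ev hst ht => cases hl; exact ⟨_, _, .refl, hst, ht⟩
  | offer => cases hl

theorem append_of_forall {u v : List (Act E)} (huv : ∀ Q, HasTrace step Q u → HasTrace step Q v)
    {s : List (Act E)} (h : HasTrace step P (s ++ u)) : HasTrace step P (s ++ v) := by
  induction s generalizing P with
  | nil => exact huv P h
  | cons x s ih =>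
    cases x with
    | inl b =>
      obtain ⟨Q, R, hPQ, hQR, hR⟩ := h.exists_of_ev_cons
      exact of_reflTransGen hPQ (.ev hQR (ih hR))
    | inr b =>
      obtain ⟨Q, hPQ, hQ, hQt⟩ := h.exists_of_offer_cons
      exact of_reflTransGen hPQ (.offer hQ (ih hQt))

theorem offer_offer_cons (h : HasTrace step P (.inr a :: t)) :
    HasTrace step P (.inr a :: .inr a :: t) := by
  obtain ⟨Q, hPQ, hQ, hQt⟩ := h.exists_of_offer_cons
  exact of_reflTransGen hPQ (.offer hQ (.offer hQ hQt))

theorem of_offer_cons (h : HasTrace step P (.inr a :: t)) : HasTrace step P t := by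
  obtain ⟨Q, hPQ, -, hQt⟩ := h.exists_of_offer_cons
  exact of_reflTransGen hPQ hQt

theorem ev_of_offer_cons (h : HasTrace step P (.inr a :: t)) : HasTrace step P [.inl a] := by
  obtain ⟨Q, hPQ, ⟨R, hQR⟩, -⟩ := h.exists_of_offer_cons
  exact of_reflTransGen hPQ (.ev hQR (.nil R))

theorem offer_ev_cons (h : HasTrace step P (.inl a :: t)) :
    HasTrace step P (.inr a :: .inl a :: t) := by
  obtain ⟨Q, R, hPQ, hQR, hR⟩ := h.exists_of_ev_cons
  exact of_reflTransGen hPQ (.offer ⟨R, hQR⟩ (.ev hQR hR))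

end HasTrace

/-- For any state `P` of any LTS, the set of availability traces of `P` is a member of the
Availability Traces Model. -/
theorem availTraces_healthy {E S : Type*} (step : S → Option E → S → Prop) (P : S) :
    Healthy (availTraces step P) := by
  simp only [Healthy, availTraces, Set.mem_ofPred_eq, List.append_assoc, List.cons_append,
    List.nil_append]
  refine ⟨⟨[], .nil P⟩, fun s t h => ?_, fun tr a tr' h => ⟨?_, ?_⟩, fun tr a h => ?_,
    fun tr a tr' h => ?_⟩
  · simpa using h.append_of_forall (v := []) fun Q _ => .nil Q
  · exact h.append_of_forall fun _ => HasTrace.offer_offer_cons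
  · exact h.append_of_forall fun _ => HasTrace.of_offer_cons
  · exact h.append_of_forall fun _ => HasTrace.ev_of_offer_cons
  · exact h.append_of_forall fun _ => HasTrace.offer_ev_cons
end

section
/- The singleton set {⟨⟩} containing only the empty trace is healthy and is a subset of every healthy set; moreover the union of any nonempty family of healthy sets is healthy. Consequently the Availability Traces Model, ordered by set inclusion, is a complete partial order with least element {⟨⟩}, in which the supremum of any nonempty directed family is its union. -/
variable {E : Type*}

lemma healthy_empty : Healthy ({[]} : Set (List (Act E))) := by
  refine ⟨⟨[], rfl⟩, ?_, ?_, ?_, ?_⟩ <;>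
    simp_all [Set.mem_singleton_iff, List.append_eq_nil_iff]

lemma healthy_sUnion (F : Set (Set (List (Act E)))) (hne : F.Nonempty)
    (hF : ∀ T ∈ F, Healthy T) : Healthy (⋃₀ F) := by
  obtain ⟨T0, hT0⟩ := hne
  refine ⟨⟨[], T0, hT0, ((hF T0 hT0).2.1 [] _ ((hF T0 hT0).1.choose_spec))⟩, ?_, ?_, ?_, ?_⟩
  · rintro s t ⟨T, hT, h⟩
    exact ⟨T, hT, (hF T hT).2.1 s t h⟩
  · rintro tr a tr' ⟨T, hT, h⟩
    obtain ⟨h1, h2⟩ := (hF T hT).2.2.1 tr a tr' h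
    exact ⟨⟨T, hT, h1⟩, ⟨T, hT, h2⟩⟩
  · rintro tr a ⟨T, hT, h⟩
    exact ⟨T, hT, (hF T hT).2.2.2.1 tr a h⟩
  · rintro tr a tr' ⟨T, hT, h⟩
    exact ⟨T, hT, (hF T hT).2.2.2.2 tr a tr' h⟩

/-- The singleton set containing only the empty trace is healthy and is contained in every
healthy set; the union of any nonempty family of healthy sets is healthy; consequently,
ordered by inclusion, the Availability Traces Model is a complete partial order with least
element `{⟨⟩}` in which the supremum of any nonempty directed family is its union. -/
theorem availability_model_cpo (E : Type*) :
    Healthy ({[]} : Set (List (Act E))) ∧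
    (∀ T : Set (List (Act E)), Healthy T → ({[]} : Set (List (Act E))) ⊆ T) ∧
    (∀ F : Set (Set (List (Act E))), F.Nonempty → (∀ T ∈ F, Healthy T) →
      Healthy (⋃₀ F)) ∧
    (∀ F : Set (Set (List (Act E))), F.Nonempty → DirectedOn (· ⊆ ·) F →
      (∀ T ∈ F, Healthy T) →
      Healthy (⋃₀ F) ∧ (∀ T ∈ F, T ⊆ ⋃₀ F) ∧
      (∀ U : Set (List (Act E)), Healthy U → (∀ T ∈ F, T ⊆ U) → ⋃₀ F ⊆ U)) := by
  refine ⟨healthy_empty, ?_, healthy_sUnion, ?_⟩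
  · intro T hT x hx
    rw [Set.mem_singleton_iff] at hx
    subst hx
    exact hT.2.1 [] _ hT.1.choose_spec
  · intro F hne _ hF
    exact ⟨healthy_sUnion F hne hF, fun T hT => Set.subset_sUnion_of_mem hT,
      fun U _ h => Set.sUnion_subset h⟩
end

section
/- Define sem recursively on availability traces by: sem(⟨⟩) = {⟨⟩}; sem(⟨a⟩ ⌢ tr) = prefix_a(sem(tr)); sem(⟨◎a⟩ ⌢ tr) = timeout(prefix_a({⟨⟩}), sem(tr)). Then for every availability trace tr, sem(tr) is the least healthy set containing tr: sem(tr) is healthy, tr ∈ sem(tr), and sem(tr) ⊆ T for every healthy set T with tr ∈ T. -/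
variable {E : Type*}

/-- The semantics of prefixing `a → ·`: `prefixA a T` consists of all finite lists of offers
`◎a`, together with all traces `s ++ [a] ++ t` where `s` is a list of offers `◎a` and `t ∈ T`. -/
def prefixA (a : E) (T : Set (List (Act E))) : Set (List (Act E)) :=
  {s | ∀ x ∈ s, x = (Sum.inr a : Act E)} ∪
  {u | ∃ s t, (∀ x ∈ s, x = (Sum.inr a : Act E)) ∧ t ∈ T ∧ u = s ++ [Sum.inl a] ++ t}

/-- A trace contains no ordinary events (only offers). -/
def NoEvents (s : List (Act E)) : Prop := ∀ x ∈ s, ∃ a : E, x = Sum.inr a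

/-- The semantics of timeout (sliding choice): `timeoutOp T U = T ∪
{ s ++ u : s ∈ T contains no ordinary events, u ∈ U }`. -/
def timeoutOp (T U : Set (List (Act E))) : Set (List (Act E)) :=
  T ∪ {v | ∃ s u, s ∈ T ∧ NoEvents s ∧ u ∈ U ∧ v = s ++ u}

/-- The set of traces generated by a single trace, defined recursively:
`sem ⟨⟩ = {⟨⟩}`; `sem (⟨a⟩ ⌢ tr) = prefixA a (sem tr)`;
`sem (⟨◎a⟩ ⌢ tr) = timeoutOp (prefixA a {⟨⟩}) (sem tr)`. -/
def sem : List (Act E) → Set (List (Act E))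
  | [] => {[]}
  | Sum.inl a :: tr => prefixA a (sem tr)
  | Sum.inr a :: tr => timeoutOp (prefixA a {[]}) (sem tr)

section AuxLemmas
variable {E : Type*}


lemma Healthy.nil_mem {T : Set (List (Act E))} (h : Healthy T) : ([] : List (Act E)) ∈ T := by
  obtain ⟨⟨t, ht⟩, hpre, -⟩ := h
  simpa using hpre [] t (by simpa using ht)

lemma split2 {α : Type*} {x : α} {u v s t : List α} (h : u ++ [x] ++ v = s ++ t) :
    (∃ m, s = u ++ [x] ++ m ∧ v = m ++ t) ∨ (∃ m, u = s ++ m ∧ t = m ++ [x] ++ v) := by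
  rw [List.append_assoc] at h
  rcases List.append_eq_append_iff.mp h with ⟨m, h1, h2⟩ | ⟨m, h1, h2⟩
  · cases m with
    | nil =>
      right; refine ⟨[], by simpa using h1.symm, ?_⟩
      simpa using h2.symm
    | cons y m =>
      left
      obtain ⟨rfl, hv⟩ : x = y ∧ v = m ++ t := by
        simpa [List.cons_eq_cons] using h2
      exact ⟨m, by simp [h1], hv⟩
  · right; exact ⟨m, h1, by simp [h2]⟩

lemma split3 {α : Type*} {x y : α} {u v s t : List α} (h : u ++ [x] ++ v = s ++ [y] ++ t) :
    (∃ m, s = u ++ [x] ++ m ∧ v = m ++ [y] ++ t) ∨ (u = s ∧ x = y ∧ v = t) ∨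
      (∃ m, u = s ++ [y] ++ m ∧ t = m ++ [x] ++ v) := by
  rw [List.append_assoc s] at h
  rcases split2 h with ⟨m, h1, h2⟩ | ⟨m, h1, h2⟩
  · exact Or.inl ⟨m, h1, by simpa [List.append_assoc] using h2⟩
  · cases m with
    | nil =>
      obtain ⟨rfl, rfl⟩ : y = x ∧ t = v := by simpa [List.cons_eq_cons] using h2
      exact Or.inr (Or.inl ⟨by simpa using h1, rfl, rfl⟩)
    | cons z m =>
      obtain ⟨rfl, ht⟩ : z = y ∧ m ++ [x] ++ v = t := by
        simpa [List.cons_eq_cons, List.append_assoc] using h2.symm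
      exact Or.inr (Or.inr ⟨m, by simp [h1], ht.symm⟩)

/-- Shifted set is healthy. -/
lemma healthy_shift {T : Set (List (Act E))} (h : Healthy T) (p : List (Act E))
    (hp : ∃ t0, p ++ t0 ∈ T) : Healthy {t | p ++ t ∈ T} := by
  obtain ⟨hne, hpre, h3, h4, h5⟩ := h
  refine ⟨hp, ?_, ?_, ?_, ?_⟩
  · intro s t hst
    exact hpre (p ++ s) t (by simpa [List.append_assoc] using hst)
  · intro tr a tr' htr
    have := h3 (p ++ tr) a tr' (by simpa [List.append_assoc] using htr)
    constructor
    · simpa [List.append_assoc] using this.1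
    · simpa [List.append_assoc] using this.2
  · intro tr a htr
    have := h4 (p ++ tr) a (by simpa [List.append_assoc] using htr)
    simpa [List.append_assoc] using this
  · intro tr a tr' htr
    have := h5 (p ++ tr) a tr' (by simpa [List.append_assoc] using htr)
    simpa [List.append_assoc] using this

/-- Pumping offers: from `p ++ [◎a] ++ q ∈ T` we get `p ++ [◎a] ++ s ++ q ∈ T`
for any list `s` of offers `◎a`. -/
lemma offers_pump {T : Set (List (Act E))} (h : Healthy T) (a : E) :
    ∀ (s : List (Act E)), (∀ x ∈ s, x = (Sum.inr a : Act E)) →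
    ∀ p q : List (Act E), p ++ [Sum.inr a] ++ q ∈ T → p ++ [Sum.inr a] ++ s ++ q ∈ T := by
  intro s
  induction s with
  | nil => intro _ p q hpq; simpa using hpq
  | cons y s ih =>
    intro hy p q hpq
    have hya : y = Sum.inr a := hy y (by simp)
    subst hya
    have hdup := (h.2.2.1 p a q hpq).1
    have := ih (fun x hx => hy x (by simp [hx])) (p ++ [Sum.inr a]) q
      (by simpa [List.append_assoc] using hdup)
    simpa [List.append_assoc] using this

lemma offers_cons_eq {a : E} : ∀ {s : List (Act E)}, (∀ x ∈ s, x = (Sum.inr a : Act E)) →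
    (Sum.inr a : Act E) :: s = s ++ [Sum.inr a] := by
  intro s
  induction s with
  | nil => simp
  | cons y s ih =>
    intro hy
    have hya : y = Sum.inr a := hy y (by simp)
    subst hya
    have := ih (fun x hx => hy x (by simp [hx]))
    simpa using congrArg (List.cons (Sum.inr a)) this

lemma healthy_prefixA {T : Set (List (Act E))} (h : Healthy T) (a : E) :
    Healthy (prefixA a T) := by
  obtain ⟨hne, hpre, h3, h4, h5⟩ := h
  have hnilT : ([] : List (Act E)) ∈ T := by
    obtain ⟨t, ht⟩ := hne
    simpa using hpre [] t (by simpa using ht)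
  refine ⟨⟨[], Or.inl (by simp)⟩, ?_, ?_, ?_, ?_⟩
  · -- prefix closed
    rintro u v (hO | ⟨s, t, hs, ht, heq⟩)
    · exact Or.inl (fun x hx => hO x (by simp [hx]))
    · rcases split2 heq.symm with ⟨m, rfl, ht'⟩ | ⟨m, rfl, rfl⟩
      · exact Or.inr ⟨s, m, hs, hpre m v (ht' ▸ ht), rfl⟩
      · exact Or.inl (fun x hx => hs x (by simp [hx]))
  · -- offer dup / removal
    rintro tr0 b tr' (hO | ⟨s, t, hs, ht, heq⟩)
    · have hb : (Sum.inr b : Act E) = Sum.inr a := hO _ (by simp)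
      have h0 : ∀ x ∈ tr0, x = (Sum.inr a : Act E) := fun x hx => hO x (by simp [hx])
      have h1 : ∀ x ∈ tr', x = (Sum.inr a : Act E) := fun x hx => hO x (by simp [hx])
      constructor
      · refine Or.inl (fun x hx => ?_)
        simp only [List.append_assoc, List.mem_append, List.mem_cons,
          List.not_mem_nil, or_false] at hx
        rcases hx with hx | (hx | hx) | hx
        · exact h0 x hx
        · exact hx.trans hb
        · exact hx.trans hb
        · exact h1 x hx
      · refine Or.inl (fun x hx => ?_)
        rcases List.mem_append.mp hx with hx | hx
        · exact h0 x hx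
        · exact h1 x hx
    · rcases split3 heq with
        ⟨m, hsm, rfl⟩ | ⟨rfl, hxy, rfl⟩ | ⟨m, rfl, rfl⟩
      · -- offer inside s
        have hb : (Sum.inr b : Act E) = Sum.inr a := hs _ (by rw [hsm]; simp)
        have h0 : ∀ x ∈ tr0, x = (Sum.inr a : Act E) := fun x hx => hs x (by rw [hsm]; simp [hx])
        have hm : ∀ x ∈ m, x = (Sum.inr a : Act E) := fun x hx => hs x (by rw [hsm]; simp [hx])
        constructor
        · refine Or.inr ⟨tr0 ++ [Sum.inr b, Sum.inr b] ++ m, t, ?_, ht, by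
            simp [List.append_assoc]⟩
          intro x hx
          simp only [List.append_assoc, List.mem_append, List.mem_cons,
            List.not_mem_nil, or_false] at hx
          rcases hx with hx | (hx | hx) | hx
          · exact h0 x hx
          · exact hx.trans hb
          · exact hx.trans hb
          · exact hm x hx
        · refine Or.inr ⟨tr0 ++ m, t, ?_, ht, by simp [List.append_assoc]⟩
          intro x hx
          rcases List.mem_append.mp hx with hx | hx
          · exact h0 x hx
          · exact hm x hx
      · exact absurd hxy (by simp)
      · -- offer inside t
        have := h3 m b tr' ht
        constructor
        · exact Or.inr ⟨s, m ++ [Sum.inr b, Sum.inr b] ++ tr', hs, this.1, by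
            simp [List.append_assoc]⟩
        · exact Or.inr ⟨s, m ++ tr', hs, this.2, by simp [List.append_assoc]⟩
  · -- offered event can be performed
    rintro tr0 b (hO | ⟨s, t, hs, ht, heq⟩)
    · have hb : b = a := by
        have := hO (Sum.inr b) (by simp)
        simpa using this
      subst hb
      exact Or.inr ⟨tr0, [], fun x hx => hO x (by simp [hx]), hnilT, by simp⟩
    · have heq' : tr0 ++ [Sum.inr b] ++ [] = s ++ [Sum.inl a] ++ t := by simpa using heq
      rcases split3 heq' with ⟨m, hsm, habs⟩ | ⟨rfl, hxy, rfl⟩ | ⟨m, rfl, rfl⟩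
      · exact absurd habs.symm (by simp)
      · exact absurd hxy (by simp)
      · have ht' : m ++ [Sum.inr b] ∈ T := by simpa using ht
        exact Or.inr ⟨s, m ++ [Sum.inl b], hs, h4 m b ht', by simp [List.append_assoc]⟩
  · -- performed event can first be offered
    rintro tr0 b tr' (hO | ⟨s, t, hs, ht, heq⟩)
    · exact absurd (hO (Sum.inl b) (by simp)) (by simp)
    · rcases split3 heq with ⟨m, hsm, rfl⟩ | ⟨rfl, hxy, rfl⟩ | ⟨m, rfl, rfl⟩
      · exact absurd (hs (Sum.inl b) (by rw [hsm]; simp)) (by simp)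
      · have hb : b = a := by simpa using hxy
        subst hb
        refine Or.inr ⟨tr0 ++ [Sum.inr b], tr', ?_, ht, by simp [List.append_assoc]⟩
        intro x hx
        rcases List.mem_append.mp hx with hx | hx
        · exact hs x hx
        · simpa using hx
      · exact Or.inr ⟨s, m ++ [Sum.inr b, Sum.inl b] ++ tr', hs, h5 m b tr' ht, by
          simp [List.append_assoc]⟩

/-- Explicit description of the timeout construct used in `sem`. -/
def semTO (a : E) (U : Set (List (Act E))) : Set (List (Act E)) :=
  {v | ∃ s u, (∀ x ∈ s, x = (Sum.inr a : Act E)) ∧ (u ∈ U ∨ u = [Sum.inl a]) ∧ v = s ++ u}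

lemma timeoutOp_eq_semTO {U : Set (List (Act E))} (hnil : ([] : List (Act E)) ∈ U) (a : E) :
    timeoutOp (prefixA a {[]}) U = semTO a U := by
  ext v
  constructor
  · rintro ((hO | ⟨s, t, hs, ht, rfl⟩) | ⟨s, u, hsP, hsN, hu, rfl⟩)
    · exact ⟨v, [], hO, Or.inl hnil, by simp⟩
    · have ht0 : t = [] := ht
      exact ⟨s, [Sum.inl a], hs, Or.inr rfl, by simp [ht0]⟩
    · rcases hsP with hsO | ⟨s', t', hs', ht', rfl⟩
      · exact ⟨s, u, hsO, Or.inl hu, rfl⟩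
      · exact absurd (hsN (Sum.inl a) (by simp)) (by simp)
  · rintro ⟨s, u, hs, (hu | rfl), rfl⟩
    · exact Or.inr ⟨s, u, Or.inl hs, fun x hx => ⟨a, hs x hx⟩, hu, rfl⟩
    · exact Or.inl (Or.inr ⟨s, [], hs, rfl, by simp⟩)

lemma healthy_semTO {U : Set (List (Act E))} (h : Healthy U) (a : E) :
    Healthy (semTO a U) := by
  obtain ⟨hne, hpre, h3, h4, h5⟩ := h
  have hnilU : ([] : List (Act E)) ∈ U := by
    obtain ⟨t, ht⟩ := hne
    simpa using hpre [] t (by simpa using ht)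
  refine ⟨⟨[], [], [], by simp, Or.inl hnilU, by simp⟩, ?_, ?_, ?_, ?_⟩
  · -- prefix closed
    rintro p q ⟨s, u, hs, hu, heq⟩
    rcases List.append_eq_append_iff.mp heq with ⟨m, hsm, hq⟩ | ⟨m, rfl, hum⟩
    · exact ⟨p, [], fun x hx => hs x (by rw [hsm]; simp [hx]), Or.inl hnilU, by simp⟩
    · rcases hu with hu | rfl
      · exact ⟨s, m, hs, Or.inl (hpre m q (hum ▸ hu)), rfl⟩
      · cases m with
        | nil => exact ⟨s, [], hs, Or.inl hnilU, by simp⟩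
        | cons y m' =>
          obtain ⟨rfl, hm'⟩ : y = Sum.inl a ∧ m' ++ q = [] := by
            simpa [List.cons_eq_cons] using hum.symm
          obtain ⟨rfl, -⟩ := List.append_eq_nil_iff.mp hm'
          exact ⟨s, [Sum.inl a], hs, Or.inr rfl, rfl⟩
  · -- offer dup / removal
    rintro tr0 b tr' ⟨s, u, hs, hu, heq⟩
    rcases split2 heq with ⟨m, hsm, rfl⟩ | ⟨m, rfl, rfl⟩
    · have hb : (Sum.inr b : Act E) = Sum.inr a := hs _ (by rw [hsm]; simp)
      have h0 : ∀ x ∈ tr0, x = (Sum.inr a : Act E) := fun x hx => hs x (by rw [hsm]; simp [hx])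
      have hm : ∀ x ∈ m, x = (Sum.inr a : Act E) := fun x hx => hs x (by rw [hsm]; simp [hx])
      constructor
      · refine ⟨tr0 ++ [Sum.inr b, Sum.inr b] ++ m, u, ?_, hu, by simp [List.append_assoc]⟩
        intro x hx
        simp only [List.append_assoc, List.mem_append, List.mem_cons,
          List.not_mem_nil, or_false] at hx
        rcases hx with hx | (hx | hx) | hx
        · exact h0 x hx
        · exact hx.trans hb
        · exact hx.trans hb
        · exact hm x hx
      · refine ⟨tr0 ++ m, u, ?_, hu, by simp [List.append_assoc]⟩
        intro x hx
        rcases List.mem_append.mp hx with hx | hx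
        · exact h0 x hx
        · exact hm x hx
    · rcases hu with hu | hiu
      · have := h3 m b tr' hu
        constructor
        · exact ⟨s, m ++ [Sum.inr b, Sum.inr b] ++ tr', hs, Or.inl this.1, by
            simp [List.append_assoc]⟩
        · exact ⟨s, m ++ tr', hs, Or.inl this.2, by simp [List.append_assoc]⟩
      · have : (Sum.inr b : Act E) ∈ ([Sum.inl a] : List (Act E)) := by
          rw [← hiu]; simp
        simp at this
  · -- offered event can be performed
    rintro tr0 b ⟨s, u, hs, hu, heq⟩
    have heq' : tr0 ++ [Sum.inr b] ++ [] = s ++ u := by simpa using heq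
    rcases split2 heq' with ⟨m, hsm, hmu⟩ | ⟨m, rfl, hum⟩
    · obtain ⟨rfl, rfl⟩ := List.append_eq_nil_iff.mp hmu.symm
      have hb : (Sum.inr b : Act E) = Sum.inr a := hs _ (by rw [hsm]; simp)
      have hba : b = a := by simpa using hb
      subst hba
      exact ⟨tr0, [Sum.inl b], fun x hx => hs x (by rw [hsm]; simp [hx]), Or.inr rfl, rfl⟩
    · rcases hu with hu | hiu
      · have hu' : m ++ [Sum.inr b] ∈ U := by
          have : u = m ++ [Sum.inr b] := by simpa using hum
          exact this ▸ hu
        exact ⟨s, m ++ [Sum.inl b], hs, Or.inl (h4 m b hu'), by simp [List.append_assoc]⟩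
      · have : (Sum.inr b : Act E) ∈ ([Sum.inl a] : List (Act E)) := by
          rw [← hiu, hum]; simp
        simp at this
  · -- performed event can first be offered
    rintro tr0 b tr' ⟨s, u, hs, hu, heq⟩
    rcases split2 heq with ⟨m, hsm, rfl⟩ | ⟨m, rfl, hum⟩
    · exact absurd (hs (Sum.inl b) (by rw [hsm]; simp)) (by simp)
    · rcases hu with hu | hiu
      · exact ⟨s, m ++ [Sum.inr b, Sum.inl b] ++ tr', hs, Or.inl (h5 m b tr' (hum ▸ hu)),
          by simp [List.append_assoc]⟩
      · rw [hiu] at hum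
        cases m with
        | cons y m' =>
          obtain ⟨-, hm'⟩ : y = Sum.inl a ∧ m' ++ [Sum.inl b] ++ tr' = [] := by
            simpa [List.cons_eq_cons] using hum
          exact absurd hm' (by simp)
        | nil =>
          obtain ⟨hba, rfl⟩ : a = b ∧ tr' = [] := by
            simpa [List.cons_eq_cons] using hum
          subst hba
          refine ⟨s ++ [Sum.inr a], [Sum.inl a], ?_, Or.inr rfl, by simp⟩
          intro x hx
          rcases List.mem_append.mp hx with hx | hx
          · exact hs x hx
          · simpa using hx

theorem sem_least_healthy' (tr : List (Act E)) :
    Healthy (sem tr) ∧ tr ∈ sem tr ∧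
    (∀ T : Set (List (Act E)), Healthy T → tr ∈ T → sem tr ⊆ T) := by
  induction tr with
  | nil =>
    refine ⟨⟨⟨[], rfl⟩, ?_, ?_, ?_, ?_⟩, rfl, ?_⟩
    · intro s t h
      simp only [sem, Set.mem_singleton_iff] at h ⊢
      exact (List.append_eq_nil_iff.mp h).1
    · intro tr a tr' h
      simp only [sem, Set.mem_singleton_iff] at h
      simp at h
    · intro tr a h
      simp only [sem, Set.mem_singleton_iff] at h
      simp at h
    · intro tr a tr' h
      simp only [sem, Set.mem_singleton_iff] at h
      simp at h
    · intro T hT htr v hv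
      simp only [sem, Set.mem_singleton_iff] at hv
      subst hv; exact htr
  | cons x tr ih =>
    obtain ⟨ihH, ihMem, ihMin⟩ := ih
    cases x with
    | inl a =>
      refine ⟨healthy_prefixA ihH a, ?_, ?_⟩
      · exact Or.inr ⟨[], tr, by simp, ihMem, by simp⟩
      · intro T hT hmem
        have hmem' : [Sum.inl a] ++ tr ∈ T := by simpa using hmem
        have key : ∀ s : List (Act E), (∀ x ∈ s, x = (Sum.inr a : Act E)) →
            s ++ [Sum.inl a] ++ tr ∈ T := by
          intro s hs
          cases s with
          | nil => simpa using hmem'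
          | cons y s' =>
            have hy : y = Sum.inr a := hs y (by simp)
            subst hy
            have h1 : ([] : List (Act E)) ++ [Sum.inr a] ++ ([Sum.inl a] ++ tr) ∈ T := by
              simpa [List.append_assoc] using hT.2.2.2.2 [] a tr (by simpa using hmem')
            have := offers_pump hT a s' (fun x hx => hs x (by simp [hx])) []
              ([Sum.inl a] ++ tr) h1
            simpa [List.append_assoc] using this
        rintro u (hO | ⟨s, t, hs, ht, rfl⟩)
        · exact hT.2.1 u ([Sum.inl a] ++ tr) (by simpa [List.append_assoc] using key u hO)
        · have hP : Healthy {t | s ++ [Sum.inl a] ++ t ∈ T} :=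
            healthy_shift hT _ ⟨tr, by simpa [List.append_assoc] using key s hs⟩
          have htr : tr ∈ {t | s ++ [Sum.inl a] ++ t ∈ T} := by
            simpa [List.append_assoc] using key s hs
          exact ihMin _ hP htr ht
    | inr a =>
      refine ⟨?_, ?_, ?_⟩
      · show Healthy (timeoutOp (prefixA a {[]}) (sem tr))
        rw [timeoutOp_eq_semTO ihH.nil_mem a]
        exact healthy_semTO ihH a
      · exact Or.inr ⟨[Sum.inr a], tr, Or.inl (by simp),
          fun x hx => ⟨a, by simpa using hx⟩, ihMem, by simp⟩
      · intro T hT hmem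
        have hmem' : [Sum.inr a] ++ tr ∈ T := by simpa using hmem
        have key2 : ∀ s : List (Act E), (∀ x ∈ s, x = (Sum.inr a : Act E)) →
            s ++ tr ∈ T := by
          intro s hs
          cases s with
          | nil =>
            simpa using (hT.2.2.1 [] a tr (by simpa using hmem')).2
          | cons y s' =>
            have hy : y = Sum.inr a := hs y (by simp)
            subst hy
            have := offers_pump hT a s' (fun x hx => hs x (by simp [hx])) [] tr
              (by simpa using hmem')
            simpa [List.append_assoc] using this
        rintro v ((hO | ⟨s, t, hs, ht, rfl⟩) | ⟨s, u, hsP, hsN, hu, rfl⟩)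
        · exact hT.2.1 v tr (key2 v hO)
        · have ht0 : t = ([] : List (Act E)) := ht
          subst ht0
          have h1 : (Sum.inr a :: s) ++ tr ∈ T := by
            refine key2 _ ?_
            intro x hx
            rcases List.mem_cons.mp hx with rfl | hx
            · rfl
            · exact hs x hx
          have h2 : Sum.inr a :: s ∈ T := hT.2.1 _ tr h1
          have h3 : s ++ [Sum.inr a] ∈ T := by rwa [offers_cons_eq hs] at h2
          simpa using hT.2.2.2.1 s a h3
        · have hsO : ∀ x ∈ s, x = (Sum.inr a : Act E) := by
            rcases hsP with h | ⟨s', t', hs', ht', rfl⟩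
            · exact h
            · exact absurd (hsN (Sum.inl a) (by simp)) (by simp)
          have hst : s ++ tr ∈ T := key2 s hsO
          have hP : Healthy {t | s ++ t ∈ T} := healthy_shift hT s ⟨tr, hst⟩
          exact ihMin _ hP hst hu

end AuxLemmas

/-- For every availability trace `tr`, `sem tr` is the least healthy set containing `tr`. -/
theorem sem_least_healthy {E : Type*} (tr : List (Act E)) :
    Healthy (sem tr) ∧ tr ∈ sem tr ∧
    (∀ T : Set (List (Act E)), Healthy T → tr ∈ T → sem tr ⊆ T) := by
  exact sem_least_healthy' tr
end

section
/- For all healthy sets T and U of availability traces, the set timeout(T, U) is healthy. -/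
variable {E : Type*}

private lemma noEvents_append {E : Type*} {s t : List (Act E)} :
    NoEvents (s ++ t) ↔ NoEvents s ∧ NoEvents t := by
  simp [NoEvents, or_imp, forall_and]

/-- Timeout preserves healthiness. -/
theorem timeoutOp_healthy {E : Type*} (T U : Set (List (Act E)))
    (hT : Healthy T) (hU : Healthy U) : Healthy (timeoutOp T U) := by
  obtain ⟨⟨t0, ht0⟩, hTpre, hT2, hT3, hT4⟩ := hT
  obtain ⟨hUne, hUpre, hU2, hU3, hU4⟩ := hU
  refine ⟨⟨t0, Or.inl ht0⟩, ?_, ?_, ?_, ?_⟩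
  · -- prefix closure
    rintro w t (h | ⟨s, u, hsT, hsNE, huU, heq⟩)
    · exact Or.inl (hTpre w t h)
    · rcases List.append_eq_append_iff.mp heq with ⟨a', hs, ht⟩ | ⟨c', hw, hu⟩
      · exact Or.inl (hTpre w a' (hs ▸ hsT))
      · exact Or.inr ⟨s, c', hsT, hsNE, hUpre c' t (hu ▸ huU), hw⟩
  · -- condition 2
    rintro tr a tr' (h | ⟨s, u, hsT, hsNE, huU, heq⟩)
    · obtain ⟨h1, h2⟩ := hT2 tr a tr' h
      exact ⟨Or.inl h1, Or.inl h2⟩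
    · rw [List.append_assoc] at heq
      rcases List.append_eq_append_iff.mp heq with ⟨a', hs, ht⟩ | ⟨c', htr, hu⟩
      · cases a' with
        | nil =>
          simp only [List.append_nil] at hs
          simp only [List.nil_append] at ht
          subst hs
          rw [← ht] at huU
          obtain ⟨h1, h2⟩ := hU2 [] a tr' (by simpa using huU)
          refine ⟨Or.inr ⟨s, _, hsT, hsNE, h1, by simp⟩,
                  Or.inr ⟨s, _, hsT, hsNE, h2, by simp⟩⟩
        | cons y rest =>
          simp only [List.cons_append, List.singleton_append, List.nil_append,
            List.cons.injEq] at ht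
          obtain ⟨rfl, htr'⟩ := ht
          subst hs
          have hsT' : tr ++ [Sum.inr a] ++ rest ∈ T := by
            simpa [List.append_assoc] using hsT
          obtain ⟨h1, h2⟩ := hT2 tr a rest hsT'
          have hne : NoEvents tr ∧ NoEvents rest := by
            constructor <;> intro x hx <;> exact hsNE x (by simp [hx])
          constructor
          · refine Or.inr ⟨tr ++ [Sum.inr a, Sum.inr a] ++ rest, u, h1, ?_,
              huU, by simp [htr', List.append_assoc]⟩
            rw [noEvents_append, noEvents_append]
            exact ⟨⟨hne.1, by simp [NoEvents]⟩, hne.2⟩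
          · refine Or.inr ⟨tr ++ rest, u, h2, ?_, huU,
              by simp [htr', List.append_assoc]⟩
            rw [noEvents_append]; exact hne
      · subst htr
        rw [hu] at huU
        obtain ⟨h1, h2⟩ := hU2 c' a tr' (by simpa [List.append_assoc] using huU)
        refine ⟨Or.inr ⟨s, _, hsT, hsNE, h1, by simp⟩,
                Or.inr ⟨s, _, hsT, hsNE, h2, by simp⟩⟩
  · -- condition 3
    rintro tr a (h | ⟨s, u, hsT, hsNE, huU, heq⟩)
    · exact Or.inl (hT3 tr a h)
    · rcases List.append_eq_append_iff.mp heq with ⟨a', hs, ht⟩ | ⟨c', htr, hu⟩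
      · cases a' with
        | nil =>
          simp only [List.append_nil] at hs
          simp only [List.nil_append] at ht
          subst hs
          rw [← ht] at huU
          exact Or.inr ⟨s, [Sum.inl a], hsT, hsNE,
            by simpa using hU3 [] a (by simpa using huU), rfl⟩
        | cons y rest =>
          simp only [List.cons_append, List.singleton_append, List.nil_append,
            List.cons.injEq] at ht
          obtain ⟨rfl, htr'⟩ := ht
          obtain ⟨rfl, rfl⟩ := List.append_eq_nil_iff.mp htr'.symm
          subst hs
          exact Or.inl (hT3 tr a (by simpa using hsT))
      · subst htr
        rw [hu] at huU
        exact Or.inr ⟨s, _, hsT, hsNE, hU3 c' a (by simpa using huU), by simp⟩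
  · -- condition 4
    rintro tr a tr' (h | ⟨s, u, hsT, hsNE, huU, heq⟩)
    · exact Or.inl (hT4 tr a tr' h)
    · rw [List.append_assoc] at heq
      rcases List.append_eq_append_iff.mp heq with ⟨a', hs, ht⟩ | ⟨c', htr, hu⟩
      · cases a' with
        | nil =>
          simp only [List.append_nil] at hs
          simp only [List.nil_append] at ht
          subst hs
          rw [← ht] at huU
          exact Or.inr ⟨s, _, hsT, hsNE, hU4 [] a tr' (by simpa using huU),
            by simp⟩
        | cons y rest =>
          simp only [List.cons_append, List.singleton_append, List.nil_append,
            List.cons.injEq] at ht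
          obtain ⟨rfl, htr'⟩ := ht
          subst hs
          exfalso
          obtain ⟨b, hb⟩ := hsNE (Sum.inl a) (by simp)
          exact Sum.inl_ne_inr hb
      · subst htr
        rw [hu] at huU
        exact Or.inr ⟨s, _, hsT, hsNE,
          hU4 c' a tr' (by simpa [List.append_assoc] using huU), by simp⟩
end

section
/- For all A, B ⊆ Σ and all healthy sets T and U of availability traces, the set par_{A,B}(T, U) is healthy. -/
variable {E : Type*}

/-- `X† = { a : a ∈ X } ∪ { ◎a : a ∈ X }`. -/
def dagger (X : Set E) : Set (Act E) :=
  {x | ∃ a ∈ X, x = Sum.inl a ∨ x = Sum.inr a}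

/-- `SyncMerge Y s t u` holds iff `u` is a synchronised merge of `s` and `t` on the
set `Y` of actions: actions in `Y` are contributed simultaneously by both traces, actions
outside `Y` by exactly one trace, interleaved in all possible ways. -/
inductive SyncMerge {α : Type*} (Y : Set α) : List α → List α → List α → Prop
  | nil : SyncMerge Y [] [] []
  | sync {x : α} {s t u} : x ∈ Y → SyncMerge Y s t u → SyncMerge Y (x :: s) (x :: t) (x :: u)
  | left {x : α} {s t u} : x ∉ Y → SyncMerge Y s t u → SyncMerge Y (x :: s) t (x :: u)
  | right {x : α} {s t u} : x ∉ Y → SyncMerge Y s t u → SyncMerge Y s (x :: t) (x :: u)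

/-- The semantics of the alphabetised parallel composition `P [A‖B] Q`. -/
def par (A B : Set E) (T U : Set (List (Act E))) : Set (List (Act E)) :=
  {tr | ∃ s ∈ T, ∃ t ∈ U, (∀ x ∈ s, x ∈ dagger A) ∧ (∀ x ∈ t, x ∈ dagger B) ∧
    SyncMerge (dagger (A ∩ B)) s t tr}

lemma dagger_inl_iff {X : Set E} {a : E} : Sum.inl a ∈ dagger X ↔ a ∈ X := by
  constructor
  · rintro ⟨b, hb, h | h⟩
    · injection h with h; subst h; exact hb
    · exact absurd h (by simp)
  · intro h; exact ⟨a, h, Or.inl rfl⟩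

lemma dagger_inr_iff {X : Set E} {a : E} : Sum.inr a ∈ dagger X ↔ a ∈ X := by
  constructor
  · rintro ⟨b, hb, h | h⟩
    · exact absurd h (by simp)
    · injection h with h; subst h; exact hb
  · intro h; exact ⟨a, h, Or.inr rfl⟩

lemma sm_append {α : Type*} {Y : Set α} {s1 t1 u1 s2 t2 u2 : List α}
    (h1 : SyncMerge Y s1 t1 u1) (h2 : SyncMerge Y s2 t2 u2) :
    SyncMerge Y (s1 ++ s2) (t1 ++ t2) (u1 ++ u2) := by
  induction h1 with
  | nil => exact h2
  | sync hx _ ih => exact .sync hx ih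
  | left hx _ ih => exact .left hx ih
  | right hx _ ih => exact .right hx ih

lemma sm_nil {α : Type*} {Y : Set α} {s t : List α} (h : SyncMerge Y s t []) :
    s = [] ∧ t = [] := by
  cases h; exact ⟨rfl, rfl⟩

lemma sm_split {α : Type*} {Y : Set α} :
    ∀ {u1 u2 s t : List α}, SyncMerge Y s t (u1 ++ u2) →
    ∃ s1 s2 t1 t2, s = s1 ++ s2 ∧ t = t1 ++ t2 ∧
      SyncMerge Y s1 t1 u1 ∧ SyncMerge Y s2 t2 u2 := by
  intro u1
  induction u1 with
  | nil => intro u2 s t h; exact ⟨[], s, [], t, rfl, rfl, .nil, h⟩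
  | cons x u1 ih =>
    intro u2 s t h
    cases h with
    | sync hx h =>
      obtain ⟨s1, s2, t1, t2, rfl, rfl, m1, m2⟩ := ih h
      exact ⟨x :: s1, s2, x :: t1, t2, rfl, rfl, .sync hx m1, m2⟩
    | left hx h =>
      obtain ⟨s1, s2, t1, t2, rfl, rfl, m1, m2⟩ := ih h
      exact ⟨x :: s1, s2, t1, t2, rfl, rfl, .left hx m1, m2⟩
    | right hx h =>
      obtain ⟨s1, s2, t1, t2, rfl, rfl, m1, m2⟩ := ih h
      exact ⟨s1, s2, x :: t1, t2, rfl, rfl, .right hx m1, m2⟩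

lemma sm_single {α : Type*} {Y : Set α} {s t : List α} {x : α} (h : SyncMerge Y s t [x]) :
    (x ∈ Y ∧ s = [x] ∧ t = [x]) ∨ (x ∉ Y ∧ s = [x] ∧ t = []) ∨ (x ∉ Y ∧ s = [] ∧ t = [x]) := by
  cases h with
  | sync hx h => obtain ⟨rfl, rfl⟩ := sm_nil h; exact Or.inl ⟨hx, rfl, rfl⟩
  | left hx h => obtain ⟨rfl, rfl⟩ := sm_nil h; exact Or.inr (Or.inl ⟨hx, rfl, rfl⟩)
  | right hx h => obtain ⟨rfl, rfl⟩ := sm_nil h; exact Or.inr (Or.inr ⟨hx, rfl, rfl⟩)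

lemma mem_repl {α : Type*} {P : α → Prop} {l1 l3 : List α} {x : α}
    (h : ∀ z ∈ l1 ++ ([x] ++ l3), P z) {y : α} (hy : P y) {l2 : List α}
    (h2 : ∀ z ∈ l2, z = x ∨ z = y) : ∀ z ∈ l1 ++ (l2 ++ l3), P z := by
  intro z hz
  rcases List.mem_append.1 hz with hz | hz
  · exact h z (List.mem_append.2 (Or.inl hz))
  rcases List.mem_append.1 hz with hz | hz
  · rcases h2 z hz with rfl | rfl
    · exact h z (List.mem_append.2 (Or.inr (List.mem_append.2 (Or.inl (by simp)))))
    · exact hy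
  · exact h z (List.mem_append.2 (Or.inr (List.mem_append.2 (Or.inr hz))))

/-- Alphabetised parallel composition preserves healthiness. -/
theorem par_healthy {E : Type*} (A B : Set E) (T U : Set (List (Act E)))
    (hT : Healthy T) (hU : Healthy U) : Healthy (par A B T U) := by
  obtain ⟨⟨w, hw⟩, hT2, hT3, hT4, hT5⟩ := hT
  obtain ⟨⟨v, hv⟩, hU2, hU3, hU4, hU5⟩ := hU
  -- right-associated reformulations of the healthiness conditions
  have hT3' : ∀ (p : List (Act E)) (a : E) (q : List (Act E)),
      p ++ ([Sum.inr a] ++ q) ∈ T →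
        p ++ ([Sum.inr a, Sum.inr a] ++ q) ∈ T ∧ p ++ q ∈ T := by
    intro p a q h
    have h' := hT3 p a q (by rwa [← List.append_assoc] at h)
    have h1 := h'.1
    rw [List.append_assoc] at h1
    exact ⟨h1, h'.2⟩
  have hU3' : ∀ (p : List (Act E)) (a : E) (q : List (Act E)),
      p ++ ([Sum.inr a] ++ q) ∈ U →
        p ++ ([Sum.inr a, Sum.inr a] ++ q) ∈ U ∧ p ++ q ∈ U := by
    intro p a q h
    have h' := hU3 p a q (by rwa [← List.append_assoc] at h)
    have h1 := h'.1
    rw [List.append_assoc] at h1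
    exact ⟨h1, h'.2⟩
  have hT5' : ∀ (p : List (Act E)) (a : E) (q : List (Act E)),
      p ++ ([Sum.inl a] ++ q) ∈ T → p ++ ([Sum.inr a, Sum.inl a] ++ q) ∈ T := by
    intro p a q h
    have h' := hT5 p a q (by rwa [← List.append_assoc] at h)
    rwa [List.append_assoc] at h'
  have hU5' : ∀ (p : List (Act E)) (a : E) (q : List (Act E)),
      p ++ ([Sum.inl a] ++ q) ∈ U → p ++ ([Sum.inr a, Sum.inl a] ++ q) ∈ U := by
    intro p a q h
    have h' := hU5 p a q (by rwa [← List.append_assoc] at h)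
    rwa [List.append_assoc] at h'
  have hTnil : ([] : List (Act E)) ∈ T := hT2 [] w hw
  have hUnil : ([] : List (Act E)) ∈ U := hU2 [] v hv
  refine ⟨⟨[], [], hTnil, [], hUnil, by simp, by simp, .nil⟩, ?_, ?_, ?_, ?_⟩
  · -- prefix closure
    rintro u1 u2 ⟨s, hs, t, ht, memA, memB, hm⟩
    obtain ⟨s1, s2, t1, t2, rfl, rfl, m1, m2⟩ := sm_split hm
    exact ⟨s1, hT2 _ _ hs, t1, hU2 _ _ ht,
      fun x hx => memA x (List.mem_append_left _ hx),
      fun x hx => memB x (List.mem_append_left _ hx), m1⟩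
  · -- offer duplication / removal
    rintro tr a tr' ⟨s, hs, t, ht, memA, memB, hm⟩
    rw [List.append_assoc] at hm
    simp only [List.append_assoc]
    obtain ⟨s1, s23, t1, t23, rfl, rfl, m1, m23⟩ := sm_split hm
    obtain ⟨s2, s3, t2, t3, rfl, rfl, m2, m3⟩ := sm_split (u1 := [Sum.inr a]) m23
    have h2dup : ∀ z ∈ [Sum.inr a, Sum.inr a],
        z = (Sum.inr a : Act E) ∨ z = Sum.inr a := by intro z hz; simp at hz; tauto
    have h2nil : ∀ z ∈ ([] : List (Act E)),
        z = (Sum.inr a : Act E) ∨ z = Sum.inr a := by simp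
    rcases sm_single m2 with ⟨hx, rfl, rfl⟩ | ⟨hx, rfl, rfl⟩ | ⟨hx, rfl, rfl⟩
    · constructor
      · exact ⟨_, (hT3' s1 a s3 hs).1, _, (hU3' t1 a t3 ht).1,
          mem_repl memA (memA _ (by simp)) h2dup,
          mem_repl memB (memB _ (by simp)) h2dup,
          sm_append m1 (sm_append (.sync hx (.sync hx .nil)) m3)⟩
      · exact ⟨_, (hT3' s1 a s3 hs).2, _, (hU3' t1 a t3 ht).2,
          mem_repl memA (memA _ (by simp)) h2nil,
          mem_repl memB (memB _ (by simp)) h2nil,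
          sm_append m1 m3⟩
    · constructor
      · exact ⟨_, (hT3' s1 a s3 hs).1, _, ht,
          mem_repl memA (memA _ (by simp)) h2dup, memB,
          sm_append m1 (sm_append (.left hx (.left hx .nil)) m3)⟩
      · exact ⟨_, (hT3' s1 a s3 hs).2, _, ht,
          mem_repl memA (memA _ (by simp)) h2nil, memB,
          sm_append m1 m3⟩
    · constructor
      · exact ⟨_, hs, _, (hU3' t1 a t3 ht).1,
          memA, mem_repl memB (memB _ (by simp)) h2dup,
          sm_append m1 (sm_append (.right hx (.right hx .nil)) m3)⟩
      · exact ⟨_, hs, _, (hU3' t1 a t3 ht).2,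
          memA, mem_repl memB (memB _ (by simp)) h2nil,
          sm_append m1 m3⟩
  · -- offered event can be performed
    rintro tr a ⟨s, hs, t, ht, memA, memB, hm⟩
    obtain ⟨s1, s2, t1, t2, rfl, rfl, m1, m2⟩ := sm_split hm
    rcases sm_single m2 with ⟨hx, rfl, rfl⟩ | ⟨hx, rfl, rfl⟩ | ⟨hx, rfl, rfl⟩
    · refine ⟨_, hT4 s1 a hs, _, hU4 t1 a ht, ?_, ?_,
        sm_append m1 (.sync (dagger_inl_iff.2 (dagger_inr_iff.1 hx)) .nil)⟩
      · intro z hz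
        rcases List.mem_append.1 hz with hz | hz
        · exact memA z (List.mem_append.2 (Or.inl hz))
        · simp at hz; subst hz
          exact dagger_inl_iff.2 (dagger_inr_iff.1 (memA _ (by simp)))
      · intro z hz
        rcases List.mem_append.1 hz with hz | hz
        · exact memB z (List.mem_append.2 (Or.inl hz))
        · simp at hz; subst hz
          exact dagger_inl_iff.2 (dagger_inr_iff.1 (memB _ (by simp)))
    · refine ⟨_, hT4 s1 a hs, _, ht, ?_, memB,
        sm_append m1 (.left (fun h => hx (dagger_inr_iff.2 (dagger_inl_iff.1 h))) .nil)⟩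
      intro z hz
      rcases List.mem_append.1 hz with hz | hz
      · exact memA z (List.mem_append.2 (Or.inl hz))
      · simp at hz; subst hz
        exact dagger_inl_iff.2 (dagger_inr_iff.1 (memA _ (by simp)))
    · refine ⟨_, hs, _, hU4 t1 a ht, memA, ?_,
        sm_append m1 (.right (fun h => hx (dagger_inr_iff.2 (dagger_inl_iff.1 h))) .nil)⟩
      intro z hz
      rcases List.mem_append.1 hz with hz | hz
      · exact memB z (List.mem_append.2 (Or.inl hz))
      · simp at hz; subst hz
        exact dagger_inl_iff.2 (dagger_inr_iff.1 (memB _ (by simp)))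
  · -- performed event can first be offered
    rintro tr a tr' ⟨s, hs, t, ht, memA, memB, hm⟩
    rw [List.append_assoc] at hm
    simp only [List.append_assoc]
    obtain ⟨s1, s23, t1, t23, rfl, rfl, m1, m23⟩ := sm_split hm
    obtain ⟨s2, s3, t2, t3, rfl, rfl, m2, m3⟩ := sm_split (u1 := [Sum.inl a]) m23
    have h2 : ∀ z ∈ [Sum.inr a, Sum.inl a],
        z = (Sum.inl a : Act E) ∨ z = Sum.inr a := by intro z hz; simp at hz; tauto
    rcases sm_single m2 with ⟨hx, rfl, rfl⟩ | ⟨hx, rfl, rfl⟩ | ⟨hx, rfl, rfl⟩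
    · exact ⟨_, hT5' s1 a s3 hs, _, hU5' t1 a t3 ht,
        mem_repl memA (dagger_inr_iff.2 (dagger_inl_iff.1 (memA _ (by simp)))) h2,
        mem_repl memB (dagger_inr_iff.2 (dagger_inl_iff.1 (memB _ (by simp)))) h2,
        sm_append m1 (sm_append
          (.sync (dagger_inr_iff.2 (dagger_inl_iff.1 hx)) (.sync hx .nil)) m3)⟩
    · exact ⟨_, hT5' s1 a s3 hs, _, ht,
        mem_repl memA (dagger_inr_iff.2 (dagger_inl_iff.1 (memA _ (by simp)))) h2, memB,
        sm_append m1 (sm_append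
          (.left (fun h => hx (dagger_inl_iff.2 (dagger_inr_iff.1 h)))
            (.left hx .nil)) m3)⟩
    · exact ⟨_, hs, _, hU5' t1 a t3 ht,
        memA, mem_repl memB (dagger_inr_iff.2 (dagger_inl_iff.1 (memB _ (by simp)))) h2,
        sm_append m1 (sm_append
          (.right (fun h => hx (dagger_inl_iff.2 (dagger_inr_iff.1 h)))
            (.right hx .nil)) m3)⟩
end

section
/- For every healthy set T of availability traces, every availability trace tr and every event a ∈ Σ: tr ⌢ ⟨◎a⟩ ∈ T if and only if tr ⌢ ⟨a⟩ ∈ T. (Hence recording availability information only at the end of a trace yields exactly the information of the standard traces model.) -/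
variable {E : Type*}

/-- In a healthy set, a trace can end with the offer `◎a` iff it can end with the event `a`:
recording availability information only at the end of a trace yields exactly the standard
traces model. -/
theorem healthy_final_offer_iff_event {E : Type*} (T : Set (List (Act E)))
    (hT : Healthy T) (tr : List (Act E)) (a : E) :
    tr ++ [Sum.inr a] ∈ T ↔ tr ++ [Sum.inl a] ∈ T := by
  obtain ⟨-, hpre, -, h3, h4⟩ := hT
  constructor
  · exact h3 tr a
  · intro h
    have := h4 tr a [] (by simpa using h)
    have := hpre (tr ++ [Sum.inr a]) [Sum.inl a] (by simpa using this)
    exact this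
end

section
/- Let L be a labelled transition system over Σ and let P, Q be states of L. Then availTraces(P) = availTraces(Q) if and only if P and Q may pass exactly the same tests, i.e. for every test T, P may T ⟺ Q may T (full abstraction of the Availability Traces Model with respect to may-testing). -/
variable {E : Type*}

/-- Tests: `T ::= SUCCESS | a → T | Ready a & T`. -/
inductive Test (E : Type*)
  | success : Test E
  | pre : E → Test E → Test E
  | ready : E → Test E → Test E

/-- `P ⟹τ P'`: `P'` is reachable from `P` by zero or more τ-transitions. -/
def TauStar {S : Type*} (step : S → Option E → S → Prop) : S → S → Prop :=
  Relation.ReflTransGen (fun P Q => step P none Q)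

/-- `MayPass step P T`: the state `P` may pass the test `T`. -/
inductive MayPass {S : Type*} (step : S → Option E → S → Prop) : S → Test E → Prop
  | success (P : S) : MayPass step P .success
  | pre {P P' Q : S} {a : E} {T : Test E} : TauStar step P P' → step P' (some a) Q →
      MayPass step Q T → MayPass step P (.pre a T)
  | ready {P P' : S} {a : E} {T : Test E} : TauStar step P P' → (∃ Q, step P' (some a) Q) →
      MayPass step P' T → MayPass step P (.ready a T)

/-- The trace corresponding to a test. -/
def traceOfTest : Test E → List (Act E)
  | .success => []
  | .pre a T => Sum.inl a :: traceOfTest T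
  | .ready a T => Sum.inr a :: traceOfTest T

/-- The test corresponding to a trace. -/
def testOfTrace : List (Act E) → Test E
  | [] => .success
  | Sum.inl a :: tr => .pre a (testOfTrace tr)
  | Sum.inr a :: tr => .ready a (testOfTrace tr)

lemma testOfTrace_traceOfTest (T : Test E) : testOfTrace (traceOfTest T) = T := by
  induction T with
  | success => rfl
  | pre a T ih => simp [traceOfTest, testOfTrace, ih]
  | ready a T ih => simp [traceOfTest, testOfTrace, ih]

lemma traceOfTest_testOfTrace (tr : List (Act E)) : traceOfTest (testOfTrace tr) = tr := by
  induction tr with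
  | nil => rfl
  | cons x tr ih => cases x <;> simp [traceOfTest, testOfTrace, ih]

lemma hasTrace_tauStar {S : Type*} {step : S → Option E → S → Prop} {P P' : S} {tr}
    (h : TauStar step P P') (ht : HasTrace step P' tr) : HasTrace step P tr := by
  induction h using Relation.ReflTransGen.head_induction_on with
  | refl => exact ht
  | head hs _ ih => exact .tau hs ih

lemma mayPass_tau {S : Type*} {step : S → Option E → S → Prop} {P Q : S} {T : Test E}
    (hs : step P none Q) (h : MayPass step Q T) : MayPass step P T := by
  cases h with
  | success => exact .success P
  | pre ht hst hm => exact .pre (Relation.ReflTransGen.head hs ht) hst hm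
  | ready ht hst hm => exact .ready (Relation.ReflTransGen.head hs ht) hst hm

lemma mayPass_of_hasTrace {S : Type*} {step : S → Option E → S → Prop} {P : S} {tr}
    (h : HasTrace step P tr) : MayPass step P (testOfTrace tr) := by
  induction h with
  | nil P => exact .success P
  | tau hs _ ih => exact mayPass_tau hs ih
  | ev hs _ ih => exact .pre .refl hs ih
  | offer hs _ ih => exact .ready .refl hs ih

lemma hasTrace_of_mayPass {S : Type*} {step : S → Option E → S → Prop} {P : S} {T : Test E}
    (h : MayPass step P T) : HasTrace step P (traceOfTest T) := by
  induction h with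
  | success P => exact .nil P
  | pre ht hs _ ih => exact hasTrace_tauStar ht (.ev hs ih)
  | ready ht hs _ ih => exact hasTrace_tauStar ht (.offer hs ih)

/-- Full abstraction of the Availability Traces Model with respect to may-testing: two
processes have the same availability traces iff they may pass exactly the same tests. -/
theorem availTraces_full_abstraction {E S : Type*} (step : S → Option E → S → Prop)
    (P Q : S) :
    availTraces step P = availTraces step Q ↔
      ∀ T : Test E, MayPass step P T ↔ MayPass step Q T := by
  constructor
  · intro h T
    rw [Set.ext_iff] at h
    constructor
    · intro hm
      have := (h (traceOfTest T)).mp (hasTrace_of_mayPass hm)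
      have := mayPass_of_hasTrace this
      rwa [testOfTrace_traceOfTest] at this
    · intro hm
      have := (h (traceOfTest T)).mpr (hasTrace_of_mayPass hm)
      have := mayPass_of_hasTrace this
      rwa [testOfTrace_traceOfTest] at this
  · intro h
    ext tr
    constructor
    · intro htr
      have := (h (testOfTrace tr)).mp (mayPass_of_hasTrace htr)
      have := hasTrace_of_mayPass this
      rwa [traceOfTest_testOfTrace] at this
    · intro htr
      have := (h (testOfTrace tr)).mpr (mayPass_of_hasTrace htr)
      have := hasTrace_of_mayPass this
      rwa [traceOfTest_testOfTrace] at this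
end

section
/- Let L be a labelled transition system over Σ and P a state of L. Then the set availSetsTraces(P) of availability-sets traces of P is a member of the Availability Sets Traces Model, i.e. it satisfies the six healthiness conditions. -/
variable {E : Type*}

/-- An availability-set action: `Sum.inl a` is an ordinary event `a ∈ Σ`, and `Sum.inr A`
is the offer `◎A` of a set `A ⊆ Σ` of events. -/
abbrev ActS (E : Type*) := E ⊕ Set E

/-- `HasTraceS step P tr` holds if `tr` is an availability-sets trace of the state `P`:
the derived transitions are the ordinary ones together with self-loops `P ⟶◎A P` whenever
every event of `A` is available at `P`. -/
inductive HasTraceS {S : Type*} (step : S → Option E → S → Prop) : S → List (ActS E) → Prop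
  | nil (P : S) : HasTraceS step P []
  | tau {P Q : S} {tr} : step P none Q → HasTraceS step Q tr → HasTraceS step P tr
  | ev {P Q : S} {a : E} {tr} : step P (some a) Q → HasTraceS step Q tr →
      HasTraceS step P (Sum.inl a :: tr)
  | offer {P : S} {A : Set E} {tr} : (∀ a ∈ A, ∃ Q, step P (some a) Q) →
      HasTraceS step P tr → HasTraceS step P (Sum.inr A :: tr)

/-- The set of availability-sets traces of a state `P`. -/
def availSetsTraces {S : Type*} (step : S → Option E → S → Prop) (P : S) :
    Set (List (ActS E)) :=
  {tr | HasTraceS step P tr}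

/-- A set `T` of availability-sets traces is a member of the Availability Sets Traces Model:
(1) nonempty and prefix-closed; (2) offers can be duplicated or removed; (3) every event of
an offered set can be performed; (4) a performed event can first be offered as a singleton;
(5) offers are subset-closed; (6) the empty set can always be offered. -/
def HealthyS (T : Set (List (ActS E))) : Prop :=
  T.Nonempty ∧
  (∀ s t : List (ActS E), s ++ t ∈ T → s ∈ T) ∧
  (∀ (tr : List (ActS E)) (A : Set E) (tr' : List (ActS E)),
    tr ++ [Sum.inr A] ++ tr' ∈ T →
      tr ++ [Sum.inr A, Sum.inr A] ++ tr' ∈ T ∧ tr ++ tr' ∈ T) ∧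
  (∀ (tr : List (ActS E)) (A : Set E),
    tr ++ [Sum.inr A] ∈ T → ∀ a ∈ A, tr ++ [Sum.inl a] ∈ T) ∧
  (∀ (tr : List (ActS E)) (a : E) (tr' : List (ActS E)),
    tr ++ [Sum.inl a] ++ tr' ∈ T → tr ++ [Sum.inr {a}, Sum.inl a] ++ tr' ∈ T) ∧
  (∀ (tr : List (ActS E)) (A B : Set E) (tr' : List (ActS E)),
    tr ++ [Sum.inr A] ++ tr' ∈ T → B ⊆ A → tr ++ [Sum.inr B] ++ tr' ∈ T) ∧
  (∀ tr tr' : List (ActS E), tr ++ tr' ∈ T → tr ++ [Sum.inr (∅ : Set E)] ++ tr' ∈ T)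

/-- Auxiliary: like `HasTraceS` but recording the final state. -/
inductive ReachS {S : Type*} (step : S → Option E → S → Prop) : S → List (ActS E) → S → Prop
  | nil (P : S) : ReachS step P [] P
  | tau {P Q R : S} {tr} : step P none Q → ReachS step Q tr R → ReachS step P tr R
  | ev {P Q R : S} {a : E} {tr} : step P (some a) Q → ReachS step Q tr R →
      ReachS step P (Sum.inl a :: tr) R
  | offer {P R : S} {A : Set E} {tr} : (∀ a ∈ A, ∃ Q, step P (some a) Q) →
      ReachS step P tr R → ReachS step P (Sum.inr A :: tr) R

theorem hasTrace_of_reach {S : Type*} {step : S → Option E → S → Prop} {P R : S}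
    {tr : List (ActS E)} (h : ReachS step P tr R) : HasTraceS step P tr := by
  induction h with
  | nil P => exact .nil P
  | tau hs _ ih => exact .tau hs ih
  | ev hs _ ih => exact .ev hs ih
  | offer hav _ ih => exact .offer hav ih

theorem reach_of_hasTrace {S : Type*} {step : S → Option E → S → Prop} {P : S}
    {tr : List (ActS E)} (h : HasTraceS step P tr) : ∃ R, ReachS step P tr R := by
  induction h with
  | nil P => exact ⟨P, .nil P⟩
  | tau hs _ ih => obtain ⟨R, hR⟩ := ih; exact ⟨R, .tau hs hR⟩
  | ev hs _ ih => obtain ⟨R, hR⟩ := ih; exact ⟨R, .ev hs hR⟩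
  | offer hav _ ih => obtain ⟨R, hR⟩ := ih; exact ⟨R, .offer hav hR⟩

theorem reach_append {S : Type*} {step : S → Option E → S → Prop} {P Q R : S}
    {s t : List (ActS E)} (h1 : ReachS step P s Q) (h2 : ReachS step Q t R) :
    ReachS step P (s ++ t) R := by
  induction h1 with
  | nil P => exact h2
  | tau hs _ ih => exact .tau hs (ih h2)
  | ev hs _ ih => exact .ev hs (ih h2)
  | offer hav _ ih => exact .offer hav (ih h2)

theorem reach_split {S : Type*} {step : S → Option E → S → Prop} {P R : S}
    {tr : List (ActS E)} (h : ReachS step P tr R) :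
    ∀ s t : List (ActS E), tr = s ++ t → ∃ Q, ReachS step P s Q ∧ ReachS step Q t R := by
  induction h with
  | nil P =>
    intro s t hst
    obtain ⟨hs, ht⟩ := List.append_eq_nil_iff.mp hst.symm
    subst hs; subst ht
    exact ⟨P, .nil P, .nil P⟩
  | tau hs _ ih =>
    intro s t hst
    obtain ⟨Q, h1, h2⟩ := ih s t hst
    exact ⟨Q, .tau hs h1, h2⟩
  | ev hs hr ih =>
    intro s t hst
    cases s with
    | nil =>
      subst hst
      exact ⟨_, .nil _, .ev hs hr⟩
    | cons x s' =>
      simp only [List.cons_append, List.cons.injEq] at hst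
      obtain ⟨hx, htr⟩ := hst
      subst hx
      obtain ⟨Q, h1, h2⟩ := ih s' t htr
      exact ⟨Q, .ev hs h1, h2⟩
  | offer hav hr ih =>
    intro s t hst
    cases s with
    | nil =>
      subst hst
      exact ⟨_, .nil _, .offer hav hr⟩
    | cons x s' =>
      simp only [List.cons_append, List.cons.injEq] at hst
      obtain ⟨hx, htr⟩ := hst
      subst hx
      obtain ⟨Q, h1, h2⟩ := ih s' t htr
      exact ⟨Q, .offer hav h1, h2⟩

theorem reach_inl {S : Type*} {step : S → Option E → S → Prop} {P R : S}
    {tr0 : List (ActS E)} (h : ReachS step P tr0 R) :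
    ∀ (a : E) (tr : List (ActS E)), tr0 = Sum.inl a :: tr →
      ∃ Q1 Q2, ReachS step P [] Q1 ∧ step Q1 (some a) Q2 ∧ ReachS step Q2 tr R := by
  induction h with
  | nil P => intro a tr h; exact absurd h (by simp)
  | tau hs _ ih =>
    intro a tr h
    obtain ⟨Q1, Q2, h1, h2, h3⟩ := ih a tr h
    exact ⟨Q1, Q2, .tau hs h1, h2, h3⟩
  | ev hs hr _ =>
    intro a tr h
    simp only [List.cons.injEq, Sum.inl.injEq] at h
    obtain ⟨ha, htr⟩ := h
    subst ha; subst htr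
    exact ⟨_, _, .nil _, hs, hr⟩
  | offer _ _ _ => intro a tr h; simp at h

theorem reach_inr {S : Type*} {step : S → Option E → S → Prop} {P R : S}
    {tr0 : List (ActS E)} (h : ReachS step P tr0 R) :
    ∀ (A : Set E) (tr : List (ActS E)), tr0 = Sum.inr A :: tr →
      ∃ Q1, ReachS step P [] Q1 ∧ (∀ a ∈ A, ∃ Q, step Q1 (some a) Q) ∧
        ReachS step Q1 tr R := by
  induction h with
  | nil P => intro A tr h; exact absurd h (by simp)
  | tau hs _ ih =>
    intro A tr h
    obtain ⟨Q1, h1, h2, h3⟩ := ih A tr h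
    exact ⟨Q1, .tau hs h1, h2, h3⟩
  | ev _ _ _ => intro A tr h; simp at h
  | offer hav hr _ =>
    intro A tr h
    simp only [List.cons.injEq, Sum.inr.injEq] at h
    obtain ⟨hA, htr⟩ := h
    subst hA; subst htr
    exact ⟨_, .nil _, hav, hr⟩

/-- For any state `P` of any LTS, the set of availability-sets traces of `P` is a member of
the Availability Sets Traces Model. -/
theorem availSetsTraces_healthy {E S : Type*} (step : S → Option E → S → Prop) (P : S) :
    HealthyS (availSetsTraces step P) := by
  have memIff : ∀ tr : List (ActS E),
      tr ∈ availSetsTraces step P ↔ ∃ R, ReachS step P tr R := by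
    intro tr
    exact ⟨reach_of_hasTrace, fun ⟨R, hR⟩ => hasTrace_of_reach hR⟩
  refine ⟨⟨[], .nil P⟩, ?_, ?_, ?_, ?_, ?_, ?_⟩
  · -- prefix closure
    intro s t h
    rw [memIff] at h ⊢
    obtain ⟨R, hR⟩ := h
    obtain ⟨Q, h1, _⟩ := reach_split hR s t rfl
    exact ⟨Q, h1⟩
  · -- offer duplication / removal
    intro tr A tr' h
    rw [memIff] at h
    obtain ⟨R, hR⟩ := h
    obtain ⟨Q, h1, h2⟩ := reach_split hR tr (Sum.inr A :: tr') (by simp)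
    obtain ⟨Q1, htau, hav, hrest⟩ := reach_inr h2 A tr' rfl
    constructor
    · rw [memIff]
      refine ⟨R, ?_⟩
      have : ReachS step Q (Sum.inr A :: Sum.inr A :: tr') R :=
        reach_append htau (.offer hav (.offer hav hrest))
      simpa using reach_append h1 this
    · rw [memIff]
      exact ⟨R, reach_append h1 (reach_append htau hrest)⟩
  · -- offered events can occur
    intro tr A h a ha
    rw [memIff] at h ⊢
    obtain ⟨R, hR⟩ := h
    obtain ⟨Q, h1, h2⟩ := reach_split hR tr [Sum.inr A] rfl
    obtain ⟨Q1, htau, hav, _⟩ := reach_inr h2 A [] rfl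
    obtain ⟨Q2, hstep⟩ := hav a ha
    exact ⟨Q2, reach_append h1 (reach_append htau (.ev hstep (.nil _)))⟩
  · -- singleton offer before event
    intro tr a tr' h
    rw [memIff] at h ⊢
    obtain ⟨R, hR⟩ := h
    obtain ⟨Q, h1, h2⟩ := reach_split hR tr (Sum.inl a :: tr') (by simp)
    obtain ⟨Q1, Q2, htau, hstep, hrest⟩ := reach_inl h2 a tr' rfl
    have hav : ∀ b ∈ ({a} : Set E), ∃ Q, step Q1 (some b) Q := by
      intro b hb
      rw [Set.mem_singleton_iff] at hb
      subst hb
      exact ⟨Q2, hstep⟩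
    have : ReachS step Q (Sum.inr {a} :: Sum.inl a :: tr') R :=
      reach_append htau (.offer hav (.ev hstep hrest))
    exact ⟨R, by simpa using reach_append h1 this⟩
  · -- subset closure of offers
    intro tr A B tr' h hBA
    rw [memIff] at h ⊢
    obtain ⟨R, hR⟩ := h
    obtain ⟨Q, h1, h2⟩ := reach_split hR tr (Sum.inr A :: tr') (by simp)
    obtain ⟨Q1, htau, hav, hrest⟩ := reach_inr h2 A tr' rfl
    have hav' : ∀ a ∈ B, ∃ Q, step Q1 (some a) Q := fun a haB => hav a (hBA haB)
    have : ReachS step Q (Sum.inr B :: tr') R :=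
      reach_append htau (.offer hav' hrest)
    exact ⟨R, by simpa using reach_append h1 this⟩
  · -- empty offer anywhere
    intro tr tr' h
    rw [memIff] at h ⊢
    obtain ⟨R, hR⟩ := h
    obtain ⟨Q, h1, h2⟩ := reach_split hR tr tr' rfl
    have : ReachS step Q (Sum.inr (∅ : Set E) :: tr') R :=
      .offer (fun a ha => absurd ha (Set.notMem_empty a)) h2
    exact ⟨R, by simpa using reach_append h1 this⟩
end

section
/- Let L be a labelled transition system over Σ and let P, Q be states of L such that: every state reachable from P or from Q by a finite sequence of transitions has only finitely many outgoing transitions (finite nondeterminism), and no state reachable from P or from Q starts an infinite sequence of consecutive τ-transitions (non-divergence). If P and Q have the same singleton availability traces, availTraces(P) = availTraces(Q), then they have the same availability-sets traces, availSetsTraces(P) = availSetsTraces(Q). -/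
variable {E : Type*}

/-- `Reach step P Q`: `Q` is reachable from `P` by a finite sequence of transitions. -/
def Reach {E S : Type*} (step : S → Option E → S → Prop) : S → S → Prop :=
  Relation.ReflTransGen (fun P Q => ∃ α, step P α Q)
/-!
Every availability-sets trace `tr` of `P` offers only finite sets, so replacing each `◎A` by `N`
consecutive blocks of the singleton offers `◎a`, `a ∈ A`, gives a singleton availability trace
`encode N tr` of `P`, hence of `Q`, for every `N`. Conversely, a run of `Q` performing `N` blocks
can only leave a block unfinished by taking a τ-step, and since `Q` is non-divergent and finitely
branching, for all large `N` some block is performed entirely at one state, where every event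
of `A` is therefore available. Pigeonholing over the finitely many transitions of each state
turns "for infinitely many `N`" into a single run witnessing `tr` for `Q`.
-/

open Filter

section Traces

variable {S : Type*} {step : S → Option E → S → Prop}

def FinitelyBranching (step : S → Option E → S → Prop) (R : S) : Prop :=
  {αR' : Option E × S | step R αR'.1 αR'.2}.Finite

def NonDivergent (step : S → Option E → S → Prop) (R : S) : Prop :=
  ¬∃ f : ℕ → S, f 0 = R ∧ ∀ n, step (f n) none (f (n + 1))

def TauReach (step : S → Option E → S → Prop) : S → S → Prop :=
  Relation.ReflTransGen fun P Q => step P none Q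

def offers (L : List E) : List (Act E) :=
  L.map Sum.inr

theorem NonDivergent.acc {R : S} (h : NonDivergent step R) :
    Acc (fun Q P => step P none Q) R :=
  not_not.1 (mt not_acc_iff_exists_descending_chain.1 h)

theorem Reach.head {α : Option E} {P Q R : S} (hPQ : step P α Q) (hQR : Reach step Q R) :
    Reach step P R :=
  Relation.ReflTransGen.head ⟨α, hPQ⟩ hQR

theorem TauReach.reach {P Q : S} (h : TauReach step P Q) : Reach step P Q :=
  Relation.ReflTransGen.mono (fun _ _ hτ => ⟨none, hτ⟩) _ _ h

theorem FinitelyBranching.finite_avail {R : S} (hR : FinitelyBranching step R) :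
    {a : E | ∃ Q, step R (some a) Q}.Finite :=
  ((hR.image Prod.fst).preimage (Option.some_injective E).injOn).subset
    fun a ⟨Q, hQ⟩ => ⟨(some a, Q), hQ, rfl⟩

theorem FinitelyBranching.exists_frequently {R : S} (hR : FinitelyBranching step R)
    {α : Option E} {p : S → ℕ → Prop} (h : ∃ᶠ N in atTop, ∃ Q, step R α Q ∧ p Q N) :
    ∃ Q, step R α Q ∧ ∃ᶠ N in atTop, p Q N :=
  ((hR.image Prod.snd).subset fun Q hQ => ⟨(α, Q), hQ, rfl⟩ : {Q | step R α Q}.Finite)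
    |>.frequently_exists.1 h

theorem frequently_atTop_succ_iff {p : ℕ → Prop} :
    (∃ᶠ n in atTop, p (n + 1)) ↔ ∃ᶠ n in atTop, p n := by
  rw [← frequently_map (m := fun n => n + 1), map_add_atTop_eq_nat]

theorem HasTraceS.of_tauReach {P Q : S} {tr : List (ActS E)} (h : TauReach step P Q)
    (hQ : HasTraceS step Q tr) : HasTraceS step P tr := by
  induction h using Relation.ReflTransGen.head_induction_on with
  | refl => exact hQ
  | head hτ _ ih => exact .tau hτ ih

theorem HasTrace.offers_append {P : S} {L : List E} {s : List (Act E)}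
    (hav : ∀ a ∈ L, ∃ Q, step P (some a) Q) (h : HasTrace step P s) :
    HasTrace step P (offers L ++ s) := by
  induction L with
  | nil => exact h
  | cons a L ih =>
    exact .offer (hav a List.mem_cons_self) (ih fun b hb => hav b (List.mem_cons_of_mem _ hb))

theorem HasTrace.of_offer_cons_s17 {P : S} {a : E} {s : List (Act E)}
    (h : HasTrace step P (Sum.inr a :: s)) : HasTrace step P s := by
  generalize ht : (Sum.inr a :: s : List (Act E)) = t at h
  induction h with
  | nil => cases ht
  | tau hτ _ ih => exact .tau hτ (ih ht)
  | ev => cases ht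
  | offer _ h => cases ht; exact h

theorem HasTrace.of_offers_append {P : S} {L : List E} {s : List (Act E)}
    (h : HasTrace step P (offers L ++ s)) : HasTrace step P s := by
  induction L with
  | nil => exact h
  | cons a L ih => exact ih h.of_offer_cons_s17

theorem HasTrace.event_cons_cases {P : S} {a : E} {s : List (Act E)}
    (h : HasTrace step P (Sum.inl a :: s)) :
    (∃ Q, step P none Q ∧ HasTrace step Q (Sum.inl a :: s)) ∨
      ∃ Q, step P (some a) Q ∧ HasTrace step Q s := by
  cases h with
  | tau hτ h => exact .inl ⟨_, hτ, h⟩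
  | ev ha h => exact .inr ⟨_, ha, h⟩

theorem HasTrace.offers_append_cases {P : S} {L : List E} {s : List (Act E)}
    (h : HasTrace step P (offers L ++ s)) :
    ((∀ a ∈ L, ∃ Q, step P (some a) Q) ∧ HasTrace step P s) ∨
      ∃ Q, step P none Q ∧ HasTrace step Q s := by
  induction L with
  | nil => exact .inl ⟨by simp, h⟩
  | cons a L ih =>
    cases h with
    | tau hτ h => exact .inr ⟨_, hτ, h.of_offer_cons_s17.of_offers_append⟩
    | offer ha h =>
      refine (ih h).imp_left fun ⟨hav, hs⟩ => ⟨?_, hs⟩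
      simpa only [List.forall_mem_cons] using ⟨ha, hav⟩


theorem exists_event_of_frequently {R : S} (hacc : Acc (fun Q P => step P none Q) R)
    (hfin : ∀ R', TauReach step R R' → FinitelyBranching step R') {a : E}
    {rest : ℕ → List (Act E)} (h : ∃ᶠ N in atTop, HasTrace step R (Sum.inl a :: rest N)) :
    ∃ R₁ R₂, TauReach step R R₁ ∧ step R₁ (some a) R₂ ∧
      ∃ᶠ N in atTop, HasTrace step R₂ (rest N) := by
  induction hacc with
  | intro R _ ih =>
    rcases frequently_or_distrib.1 (h.mono fun _ hN => hN.event_cons_cases) with hτ | hev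
    · obtain ⟨R', hR', hR'tr⟩ := (hfin R .refl).exists_frequently hτ
      obtain ⟨R₁, R₂, h₁, h₂, h₃⟩ := ih R' hR' (fun _ h => hfin _ (.head hR' h)) hR'tr
      exact ⟨R₁, R₂, .head hR' h₁, h₂, h₃⟩
    · obtain ⟨R₂, h₂, h₃⟩ := (hfin R .refl).exists_frequently hev
      exact ⟨R, R₂, .refl, h₂, h₃⟩

theorem exists_offers_of_frequently {R : S} (hacc : Acc (fun Q P => step P none Q) R)
    (hfin : ∀ R', TauReach step R R' → FinitelyBranching step R') {L : List E}
    {rest : ℕ → List (Act E)}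
    (h : ∃ᶠ N in atTop, HasTrace step R (offers (List.replicate N L).flatten ++ rest N)) :
    ∃ R', TauReach step R R' ∧ (∀ a ∈ L, ∃ Q, step R' (some a) Q) ∧
      ∃ᶠ N in atTop, HasTrace step R' (rest N) := by
  induction hacc generalizing rest with
  | intro R _ ih =>
    rw [← frequently_atTop_succ_iff] at h
    have hcases := h.mono fun N hN => by
      rw [List.replicate_succ, List.flatten_cons, offers, List.map_append,
        List.append_assoc] at hN
      exact hN.offers_append_cases
    rcases frequently_or_distrib.1 hcases with hhere | hτ
    · obtain ⟨hav, hfreq⟩ := frequently_and_distrib_left.1 hhere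
      exact ⟨R, .refl, hav,
        frequently_atTop_succ_iff.1 (hfreq.mono fun _ hN => hN.of_offers_append)⟩
    · obtain ⟨R', hR', hR'tr⟩ := (hfin R .refl).exists_frequently hτ
      obtain ⟨R'', h₁, hav, h₂⟩ := ih R' hR' (fun _ h => hfin _ (.head hR' h)) hR'tr
      exact ⟨R'', .head hR' h₁, hav, frequently_atTop_succ_iff.1 h₂⟩


open Classical in
noncomputable def enumerate (A : Set E) : List E :=
  if hA : A.Finite then hA.toFinset.toList else []

theorem mem_enumerate {A : Set E} (hA : A.Finite) {a : E} : a ∈ enumerate A ↔ a ∈ A := by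
  rw [enumerate, dif_pos hA, Finset.mem_toList, Set.Finite.mem_toFinset]

theorem mem_of_mem_enumerate {A : Set E} {a : E} (h : a ∈ enumerate A) : a ∈ A := by
  by_cases hA : A.Finite
  · exact (mem_enumerate hA).1 h
  · simp [enumerate, hA] at h

noncomputable def encode (N : ℕ) : List (ActS E) → List (Act E)
  | [] => []
  | Sum.inl a :: tr => Sum.inl a :: encode N tr
  | Sum.inr A :: tr => offers (List.replicate N (enumerate A)).flatten ++ encode N tr

theorem HasTraceS.finite_of_offer {P : S} {tr : List (ActS E)} (h : HasTraceS step P tr)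
    (hfin : ∀ R, Reach step P R → FinitelyBranching step R) {A : Set E}
    (hA : Sum.inr A ∈ tr) : A.Finite := by
  induction h with
  | nil => cases hA
  | tau hτ _ ih => exact ih (fun R hR => hfin R (.head hτ hR)) hA
  | ev ha _ ih =>
    exact ih (fun R hR => hfin R (.head ha hR)) (List.mem_of_ne_of_mem (by simp) hA)
  | @offer P B tr hav _ ih =>
    rcases List.mem_cons.1 hA with hAB | hA
    · cases hAB
      exact (hfin P .refl).finite_avail.subset hav
    · exact ih hfin hA

theorem HasTraceS.hasTrace_encode {P : S} {tr : List (ActS E)} (h : HasTraceS step P tr)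
    (hfin : ∀ R, Reach step P R → FinitelyBranching step R) (N : ℕ) :
    HasTrace step P (encode N tr) := by
  induction h with
  | nil => exact .nil _
  | tau hτ _ ih => exact .tau hτ (ih fun R hR => hfin R (.head hτ hR))
  | ev ha _ ih => exact .ev ha (ih fun R hR => hfin R (.head ha hR))
  | offer hav _ ih =>
    refine (ih hfin).offers_append fun a ha => hav a (mem_of_mem_enumerate ?_)
    simp only [List.mem_flatten, List.mem_replicate] at ha
    obtain ⟨_, ⟨_, rfl⟩, ha⟩ := ha
    exact ha

theorem HasTraceS.of_frequently_hasTrace_encode {tr : List (ActS E)}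
    (htr : ∀ A, Sum.inr A ∈ tr → A.Finite) {R : S}
    (hfin : ∀ R', Reach step R R' → FinitelyBranching step R')
    (hnd : ∀ R', Reach step R R' → NonDivergent step R')
    (h : ∃ᶠ N in atTop, HasTrace step R (encode N tr)) : HasTraceS step R tr := by
  induction tr generalizing R with
  | nil => exact .nil R
  | cons x tr ih =>
    have htr' A (hA : Sum.inr A ∈ tr) : A.Finite := htr A (List.mem_cons_of_mem _ hA)
    have hfinτ R' (hR' : TauReach step R R') : FinitelyBranching step R' := hfin R' hR'.reach
    cases x with
    | inl a =>
      obtain ⟨R₁, R₂, h₁, h₂, h₃⟩ := exists_event_of_frequently (hnd R .refl).acc hfinτ h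
      have hR₂ : Reach step R R₂ := h₁.reach.trans (Relation.ReflTransGen.single ⟨_, h₂⟩)
      exact HasTraceS.of_tauReach h₁ <| .ev h₂ <|
        ih htr' (fun _ h => hfin _ (hR₂.trans h)) (fun _ h => hnd _ (hR₂.trans h)) h₃
    | inr A =>
      obtain ⟨R', h₁, hav, h₃⟩ := exists_offers_of_frequently (hnd R .refl).acc hfinτ h
      have hR' : Reach step R R' := h₁.reach
      exact HasTraceS.of_tauReach h₁ <|
        .offer (fun a ha => hav a ((mem_enumerate (htr A List.mem_cons_self)).2 ha)) <|
          ih htr' (fun _ h => hfin _ (hR'.trans h)) (fun _ h => hnd _ (hR'.trans h)) h₃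

theorem availSetsTraces_subset {P Q : S}
    (hfinP : ∀ R, Reach step P R → FinitelyBranching step R)
    (hfinQ : ∀ R, Reach step Q R → FinitelyBranching step R)
    (hndQ : ∀ R, Reach step Q R → NonDivergent step R)
    (h : availTraces step P ⊆ availTraces step Q) :
    availSetsTraces step P ⊆ availSetsTraces step Q := fun _ htr =>
  HasTraceS.of_frequently_hasTrace_encode (fun _ hA => htr.finite_of_offer hfinP hA) hfinQ hndQ
    (Frequently.of_forall fun N => h (htr.hasTrace_encode hfinP N))

end Traces

/-- For non-divergent, finitely nondeterministic processes, equivalence in the Singleton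
Availability Traces Model implies equivalence in the Availability Sets Traces Model. -/
theorem singleton_eq_implies_sets_eq {E S : Type*} (step : S → Option E → S → Prop)
    (P Q : S)
    (hfin : ∀ R : S, (Reach step P R ∨ Reach step Q R) →
      {αR' : Option E × S | step R αR'.1 αR'.2}.Finite)
    (hnodiv : ∀ R : S, (Reach step P R ∨ Reach step Q R) →
      ¬∃ f : ℕ → S, f 0 = R ∧ ∀ n, step (f n) none (f (n + 1)))
    (h : availTraces step P = availTraces step Q) :
    availSetsTraces step P = availSetsTraces step Q := by
  have hfinP R (hR : Reach step P R) : FinitelyBranching step R := hfin R (.inl hR)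
  have hfinQ R (hR : Reach step Q R) : FinitelyBranching step R := hfin R (.inr hR)
  exact (availSetsTraces_subset hfinP hfinQ (fun R hR => hnodiv R (.inr hR)) h.subset).antisymm
    (availSetsTraces_subset hfinQ hfinP (fun R hR => hnodiv R (.inl hR)) h.symm.subset)
end

section
/- Let L be a labelled transition system over Σ and let R be a simulation on its states. If P R Q, then every availability-sets trace of P is an availability-sets trace of Q: availSetsTraces(P) ⊆ availSetsTraces(Q). Consequently, if P and Q are similar (P is simulated by Q and Q is simulated by P), then availSetsTraces(P) = availSetsTraces(Q). -/
variable {E : Type*}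

/-- `R` is a simulation on the states of the LTS `step`. -/
def IsSimulation {E S : Type*} (step : S → Option E → S → Prop) (R : S → S → Prop) : Prop :=
  ∀ (α : Option E) (P Q P' : S), R P Q → step P α P' → ∃ Q', step Q α Q' ∧ R P' Q'

/-- If `R` is a simulation and `P R Q` then every availability-sets trace of `P` is one of
`Q`; consequently similar processes have the same availability-sets traces. -/
theorem simulation_availSetsTraces {E S : Type*} (step : S → Option E → S → Prop) :
    (∀ R : S → S → Prop, IsSimulation step R → ∀ P Q : S, R P Q →
      availSetsTraces step P ⊆ availSetsTraces step Q) ∧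
    (∀ R R' : S → S → Prop, IsSimulation step R → IsSimulation step R' →
      ∀ P Q : S, R P Q → R' Q P →
        availSetsTraces step P = availSetsTraces step Q) := by
  have main : ∀ R : S → S → Prop, IsSimulation step R → ∀ P Q : S, R P Q →
      availSetsTraces step P ⊆ availSetsTraces step Q := by
    intro R hR P Q hPQ tr htr
    induction htr generalizing Q with
    | nil P => exact HasTraceS.nil Q
    | tau h _ ih =>
      obtain ⟨Q', hs, hr⟩ := hR _ _ _ _ hPQ h
      exact HasTraceS.tau hs (ih _ hr)
    | ev h _ ih =>
      obtain ⟨Q', hs, hr⟩ := hR _ _ _ _ hPQ h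
      exact HasTraceS.ev hs (ih _ hr)
    | offer h _ ih =>
      refine HasTraceS.offer (fun a ha => ?_) (ih _ hPQ)
      obtain ⟨P', hP'⟩ := h a ha
      obtain ⟨Q', hs, _⟩ := hR _ _ _ _ hPQ hP'
      exact ⟨Q', hs⟩
  exact ⟨main, fun R R' hR hR' P Q h h' =>
    Set.Subset.antisymm (main R hR P Q h) (main R' hR' Q P h')⟩
end

section
/- Suppose Σ contains two distinct events. Then for every n ≥ 1 there exist healthy sets T and T' of availability traces such that T ∩ Obs_{n−1} = T' ∩ Obs_{n−1} but T ∩ Obs_n ≠ T' ∩ Obs_n. (Hence the model A_n, which records at most n offers between consecutive ordinary events, strictly refines A_{n−1}.) -/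
variable {E : Type*}

/-- `Obs m`: availability traces in which every block of consecutive offer actions has
length at most `m`. -/
def Obs (m : ℕ) : Set (List (Act E)) :=
  {tr | ∀ s u t : List (Act E), tr = s ++ u ++ t →
    (∀ x ∈ u, ∃ a : E, x = Sum.inr a) → u.length ≤ m}

namespace List

section
variable {α : Type*} [DecidableEq α]

theorem destutter'_ne_cons_cons_self (a c : α) (l : List α) :
    (c :: c :: l).destutter' (· ≠ ·) a = (c :: l).destutter' (· ≠ ·) a := by
  by_cases h : a = c <;> simp [destutter', h]

theorem destutter'_ne_append_cons_cons_self (c : α) (l₂ : List α) :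
    ∀ (l₁ : List α) (a : α),
      (l₁ ++ c :: c :: l₂).destutter' (· ≠ ·) a =
        (l₁ ++ c :: l₂).destutter' (· ≠ ·) a
  | [], a => destutter'_ne_cons_cons_self a c l₂
  | x :: l₁, a => by
    by_cases h : a = x <;> simp [h, destutter'_ne_append_cons_cons_self c l₂ l₁]

theorem destutter_ne_append_cons_cons_self (l₁ : List α) (c : α) (l₂ : List α) :
    (l₁ ++ c :: c :: l₂).destutter (· ≠ ·) = (l₁ ++ c :: l₂).destutter (· ≠ ·) := by
  cases l₁ <;> simp [destutter_cons', destutter'_ne_append_cons_cons_self]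

theorem Sublist.length_destutter_ne_le {l₁ l₂ : List α} (h : l₁ <+ l₂) :
    (l₁.destutter (· ≠ ·)).length ≤ (l₂.destutter (· ≠ ·)).length :=
  (isChain_destutter _ l₁).length_le_length_destutter_ne ((destutter_sublist _ l₁).trans h)

end

theorem exists_length_eq_isChain_ne {α : Type*} [Nontrivial α] :
    ∀ k : ℕ, ∃ l : List α, l.length = k ∧ l.IsChain (· ≠ ·)
  | 0 => ⟨[], rfl, .nil⟩
  | k + 1 => by
    obtain ⟨l, hlen, hl⟩ := exists_length_eq_isChain_ne (α := α) k
    cases l with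
    | nil => exact ⟨[Classical.arbitrary α], by simp_all⟩
    | cons x l =>
      obtain ⟨y, hy⟩ := exists_ne x
      exact ⟨y :: x :: l, by simp [hlen], isChain_cons_cons.2 ⟨hy, hl⟩⟩

end List

theorem Healthy.inter {S T : Set (List (Act E))} (hS : Healthy S) (hT : Healthy T) :
    Healthy (S ∩ T) := by
  obtain ⟨⟨s, hs⟩, hS₁, hS₂, hS₃, hS₄⟩ := hS
  obtain ⟨⟨t, ht⟩, hT₁, hT₂, hT₃, hT₄⟩ := hT
  refine ⟨⟨[], hS₁ [] s hs, hT₁ [] t ht⟩, fun u v h => ⟨hS₁ u v h.1, hT₁ u v h.2⟩,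
    fun tr a tr' h => ?_, fun tr a h => ⟨hS₃ tr a h.1, hT₃ tr a h.2⟩,
    fun tr a tr' h => ⟨hS₄ tr a tr' h.1, hT₄ tr a tr' h.2⟩⟩
  obtain ⟨hS_dup, hS_del⟩ := hS₂ tr a tr' h.1
  obtain ⟨hT_dup, hT_del⟩ := hT₂ tr a tr' h.2
  exact ⟨⟨hS_dup, hT_dup⟩, hS_del, hT_del⟩

theorem healthy_preimage_map_elim_id {W : Set (List E)} (hW : [] ∈ W)
    (hsub : ∀ ⦃l₁ l₂ : List E⦄, l₁.Sublist l₂ → l₂ ∈ W → l₁ ∈ W)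
    (hstutter : ∀ l₁ c l₂, l₁ ++ c :: l₂ ∈ W → l₁ ++ c :: c :: l₂ ∈ W) :
    Healthy (List.map (Sum.elim id id) ⁻¹' W : Set (List (Act E))) := by
  refine ⟨⟨[], hW⟩, fun s t h => hsub (by simp) h, fun tr a tr' h => ?_,
    fun tr a h => by simpa using h, fun tr a tr' h => ?_⟩
  · simp only [Set.mem_preimage, List.map_append, List.map_cons, Sum.elim_inr,
      id_eq, List.append_assoc, List.cons_append, List.nil_append] at h ⊢
    exact ⟨hstutter _ _ _ h, hsub (by simp) h⟩
  · simpa using hstutter _ _ _ (by simpa using h)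

def offersThenEvent : Set (List (Act E)) := {t | ∀ a, Sum.inl a ∉ t.dropLast}

theorem healthy_offersThenEvent : Healthy (offersThenEvent : Set (List (Act E))) := by
  refine ⟨⟨[], by simp [offersThenEvent]⟩, fun s t h a ha => ?_, fun tr a tr' h => ?_,
    fun tr a h => by simpa [offersThenEvent] using h, fun tr a tr' h => ?_⟩
  · rcases t.eq_nil_or_concat with rfl | ⟨t, y, rfl⟩
    · exact h a (by simpa using ha)
    · exact h a (by simpa [← List.append_assoc] using Or.inl (List.dropLast_subset s ha))
  · cases tr' with
    | nil =>
      have h' : ∀ b, Sum.inl b ∉ tr := by simpa [offersThenEvent] using h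
      simpa [offersThenEvent, h'] using fun b hb => h' b (List.dropLast_subset tr hb)
    | cons y t => simp_all [offersThenEvent]
  · obtain rfl : tr' = [] := by
      by_contra hne
      obtain ⟨y, t, rfl⟩ := List.exists_cons_of_ne_nil hne
      simpa using h a
    simpa [offersThenEvent] using h

theorem length_le_of_mem_offersThenEvent_of_mem_obs {t : List (Act E)} {m : ℕ}
    (ht : t ∈ offersThenEvent) (hobs : t ∈ Obs m) : t.length ≤ m + 1 := by
  obtain ⟨r, hr⟩ := t.dropLast_prefix
  have hoffers : ∀ x ∈ t.dropLast, ∃ a, x = Sum.inr a := by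
    rintro (a | a) hx
    · exact absurd hx (ht a)
    · exact ⟨a, rfl⟩
  have := hobs [] t.dropLast r (by simp [hr]) hoffers
  rw [List.length_dropLast] at this
  omega

theorem mem_obs_of_length_le {t : List (Act E)} {m : ℕ} {a : E} (hlen : t.length ≤ m + 1)
    (ha : Sum.inl a ∈ t) : t ∈ Obs m := by
  rintro s u r rfl hu
  have ha_notMem : Sum.inl a ∉ u := fun h => by simpa using hu _ h
  have : 0 < s.length + r.length := by
    rcases s with _ | _ <;> rcases r with _ | _ <;> simp_all
  simp only [List.length_append] at hlen
  omega

section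
variable [DecidableEq E]

def letterRuns (t : List (Act E)) : ℕ := ((t.map (Sum.elim id id)).destutter (· ≠ ·)).length

def boundedRuns (s : ℕ) : Set (List (Act E)) := offersThenEvent ∩ {t | letterRuns t ≤ s}

theorem letterRuns_le_length (t : List (Act E)) : letterRuns t ≤ t.length := by
  simpa [letterRuns] using (List.destutter_sublist (· ≠ ·) (t.map (Sum.elim id id))).length_le

theorem healthy_boundedRuns (s : ℕ) : Healthy (boundedRuns s : Set (List (Act E))) :=
  healthy_offersThenEvent.inter <|
    healthy_preimage_map_elim_id (W := {w | (w.destutter (· ≠ ·)).length ≤ s}) (by simp)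
      (fun _ _ h hw => h.length_destutter_ne_le.trans hw)
      (fun l₁ c l₂ hw => by simpa [List.destutter_ne_append_cons_cons_self] using hw)

theorem boundedRuns_inter_obs_of_le {s m : ℕ} (h : m + 1 ≤ s) :
    (boundedRuns s ∩ Obs m : Set (List (Act E))) = offersThenEvent ∩ Obs m := by
  refine Set.ext fun t => ⟨fun ⟨ht, hobs⟩ => ⟨ht.1, hobs⟩, fun ⟨ht, hobs⟩ => ⟨⟨ht, ?_⟩, hobs⟩⟩
  calc letterRuns t ≤ t.length := letterRuns_le_length t
    _ ≤ m + 1 := length_le_of_mem_offersThenEvent_of_mem_obs ht hobs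
    _ ≤ s := h

theorem boundedRuns_succ_diff_inter_obs_nonempty [Nontrivial E] (s : ℕ) :
    (boundedRuns (s + 1) \ boundedRuns s ∩ Obs s : Set (List (Act E))).Nonempty := by
  obtain ⟨l, hlen, hl⟩ := List.exists_length_eq_isChain_ne (α := E) (s + 1)
  obtain ⟨u, x, rfl⟩ := (List.eq_nil_or_concat l).resolve_left (by rintro rfl; simp at hlen)
  rw [List.concat_eq_append] at hlen hl
  have hruns : letterRuns (u.map Sum.inr ++ [Sum.inl x]) = s + 1 := by
    have : (u.map Sum.inr ++ [Sum.inl x]).map (Sum.elim id id) = u ++ [x] := by simp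
    rw [letterRuns, this, List.destutter_of_isChain _ _ hl, hlen]
  refine ⟨_, ⟨⟨by simp [offersThenEvent], hruns.le⟩, fun h => ?_⟩,
    mem_obs_of_length_le (by simpa using hlen.le) (by simp : Sum.inl x ∈ _)⟩
  have : s + 1 ≤ s := hruns ▸ h.2
  omega
end

/-- If `Σ` contains two distinct events then, for every `n ≥ 1`, the model `A_n` (recording
at most `n` offers between consecutive ordinary events) strictly refines `A_{n-1}`: there
are healthy sets agreeing on `Obs (n-1)` but differing on `Obs n`. -/
theorem obs_hierarchy_strict {E : Type*} (a b : E) (hab : a ≠ b) (n : ℕ) (hn : 1 ≤ n) :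
    ∃ T T' : Set (List (Act E)), Healthy T ∧ Healthy T' ∧
      T ∩ Obs (n - 1) = T' ∩ Obs (n - 1) ∧ T ∩ Obs n ≠ T' ∩ Obs n := by
  classical
  have : Nontrivial E := ⟨a, b, hab⟩
  refine ⟨boundedRuns n, boundedRuns (n + 1), healthy_boundedRuns n,
    healthy_boundedRuns (n + 1), ?_, ?_⟩
  · rw [boundedRuns_inter_obs_of_le (by omega), boundedRuns_inter_obs_of_le (by omega)]
  · obtain ⟨t, ⟨ht, ht'⟩, hobs⟩ := boundedRuns_succ_diff_inter_obs_nonempty (E := E) n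
    intro h
    have : t ∈ boundedRuns n ∩ Obs n := h ▸ ⟨ht, hobs⟩
    exact ht' this.1
end
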